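/- arXiv:1504.02965 — 3 statements merged into one kernel-verified Lean document; each statement's English description precedes it below -/
import Mathlib

section
/- For every n ≥ 1 and all x, ξ ∈ ℝ^d one has a_{n+1}(x) ≥ a_n(x), A_{n+1}(x,ξ) ≥ A_n(x,ξ), r_{n+1}(ξ) ≤ r_n(ξ), and R_n(x,ξ) ≥ R_{n−1}(x,ξ); in particular the pointwise limits A := lim_n A_n and R := lim_n R_n exist and take values in [0,1]. -/
/-!
Each half-step of the algorithm truncates a weighted measure at its *unit radius*, the largest
radius whose closed ball has mass at most `1`: the application step weights `ψ` by
`1 - Rₙ₋₁(x, ·)`, the rejection step weights `φ` by `Aₙ(·, ξ)`, and the boundary sphere receives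
the fraction of its mass that completes the open ball to mass `1`. A heavier weight has a smaller
unit radius and, at an unchanged radius, a smaller boundary fraction. So, inductively,
`Rₙ₋₁ ≤ Rₙ` lightens the application weights, which makes `aₙ` and `Aₙ` grow; that makes the
rejection weights heavier, so `rₙ` shrinks and `Rₙ` grows. Monotone sequences in `[0, 1]`
converge.
-/

open MeasureTheory Filter Metric Bornology
open scoped ENNReal NNReal Topology

noncomputable section

attribute [local instance] Classical.propDecidable

/-- Euclidean space `ℝ^d`. -/
abbrev Rd (d : ℕ) : Type := EuclideanSpace ℝ (Fin d)

/-- Locally finite: finite on bounded sets. -/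
def LocFin {d : ℕ} (μ : Measure (Rd d)) : Prop :=
  ∀ s : Set (Rd d), IsBounded s → μ s < ⊤

/-- A sub-balancing density for `(φ, ψ)`. -/
def IsSubBalancing {d : ℕ} (φ ψ : Measure (Rd d)) (f : Rd d → Rd d → ℝ) : Prop :=
  Measurable (Function.uncurry f) ∧ (∀ x ξ, 0 ≤ f x ξ) ∧
  (∀ x, ∫⁻ ξ, ENNReal.ofReal (f x ξ) ∂ψ ≤ 1) ∧
  (∀ ξ, ∫⁻ x, ENNReal.ofReal (f x ξ) ∂φ ≤ 1)

/-- A balancing density for `(φ, ψ)`. -/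
def IsBalancing {d : ℕ} (φ ψ : Measure (Rd d)) (f : Rd d → Rd d → ℝ) : Prop :=
  IsSubBalancing φ ψ f ∧
  (∀ᵐ x ∂φ, ∫⁻ ξ, ENNReal.ofReal (f x ξ) ∂ψ = 1) ∧
  (∀ᵐ ξ ∂ψ, ∫⁻ x, ENNReal.ofReal (f x ξ) ∂φ = 1)

/-- A constrained density for `(φ, ψ)`. -/
def IsConstrainedDensity {d : ℕ} (φ ψ : Measure (Rd d)) (f : Rd d → Rd d → ℝ) : Prop :=
  IsSubBalancing φ ψ f ∧ ∀ x ξ, f x ξ ≤ 1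

/-- The site `x` is `f`-unexhausted. -/
def Unexhausted {d : ℕ} (ψ : Measure (Rd d)) (f : Rd d → Rd d → ℝ) (x : Rd d) : Prop :=
  ∫⁻ ξ, ENNReal.ofReal (f x ξ) ∂ψ < 1

/-- The center `ξ` is `f`-unsated. -/
def Unsated {d : ℕ} (φ : Measure (Rd d)) (f : Rd d → Rd d → ℝ) (ξ : Rd d) : Prop :=
  ∫⁻ x, ENNReal.ofReal (f x ξ) ∂φ < 1

/-- The site `x₀` `f`-desires the center `ξ₀`. -/
def SiteDesires {d : ℕ} (ψ : Measure (Rd d)) (f : Rd d → Rd d → ℝ) (x₀ ξ₀ : Rd d) : Prop :=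
  f x₀ ξ₀ < 1 ∧ (Unexhausted ψ f x₀ ∨ ∃ ξ₁, dist x₀ ξ₀ < dist x₀ ξ₁ ∧ 0 < f x₀ ξ₁)

/-- The center `ξ₀` `f`-desires the site `x₀`. -/
def CenterDesires {d : ℕ} (φ : Measure (Rd d)) (f : Rd d → Rd d → ℝ) (x₀ ξ₀ : Rd d) : Prop :=
  f x₀ ξ₀ < 1 ∧ (Unsated φ f ξ₀ ∨ ∃ x₁, dist x₀ ξ₀ < dist x₁ ξ₀ ∧ 0 < f x₁ ξ₀)

/-- A stable constrained density for `(φ, ψ)`. -/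
def IsStableDensity {d : ℕ} (φ ψ : Measure (Rd d)) (f : Rd d → Rd d → ℝ) : Prop :=
  IsConstrainedDensity φ ψ f ∧
  ¬∃ x₀ ξ₀, SiteDesires ψ f x₀ ξ₀ ∧ CenterDesires φ f x₀ ξ₀

/-- Application radius given previous rejection function `Rp`. -/
def appRad {d : ℕ} (ψ : Measure (Rd d)) (Rp : Rd d → Rd d → ℝ) (x : Rd d) : ℝ≥0∞ :=
  sSup (ENNReal.ofReal '' {a : ℝ | 0 ≤ a ∧
    ∫⁻ ξ in closedBall x a, ENNReal.ofReal (1 - Rp x ξ) ∂ψ ≤ 1})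

/-- The boundary weight `c` in the application step. -/
def appC {d : ℕ} (ψ : Measure (Rd d)) (Rp : Rd d → Rd d → ℝ) (x : Rd d) : ℝ :=
  if appRad ψ Rp x ≠ ⊤ ∧
      0 < ∫⁻ ξ in sphere x (appRad ψ Rp x).toReal, ENNReal.ofReal (1 - Rp x ξ) ∂ψ then
    1 - (1 - (∫⁻ ξ in ball x (appRad ψ Rp x).toReal, ENNReal.ofReal (1 - Rp x ξ) ∂ψ).toReal) /
      (∫⁻ ξ in sphere x (appRad ψ Rp x).toReal, ENNReal.ofReal (1 - Rp x ξ) ∂ψ).toReal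
  else 1

/-- The application function built from the previous rejection function `Rp`. -/
def appFun {d : ℕ} (ψ : Measure (Rd d)) (Rp : Rd d → Rd d → ℝ) (x ξ : Rd d) : ℝ :=
  if ENNReal.ofReal (dist x ξ) < appRad ψ Rp x then 1
  else if ENNReal.ofReal (dist x ξ) = appRad ψ Rp x then
    appC ψ Rp x * Rp x ξ + (1 - appC ψ Rp x)
  else 0

/-- Rejection radius given the current application function `A`. -/
def rejRad {d : ℕ} (φ : Measure (Rd d)) (A : Rd d → Rd d → ℝ) (ξ : Rd d) : ℝ≥0∞ :=
  sSup (ENNReal.ofReal '' {r : ℝ | 0 ≤ r ∧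
    ∫⁻ x in closedBall ξ r, ENNReal.ofReal (A x ξ) ∂φ ≤ 1})

/-- The boundary weight `c′` in the rejection step. -/
def rejC {d : ℕ} (φ : Measure (Rd d)) (A : Rd d → Rd d → ℝ) (ξ : Rd d) : ℝ :=
  if rejRad φ A ξ ≠ ⊤ ∧
      0 < ∫⁻ x in sphere ξ (rejRad φ A ξ).toReal, ENNReal.ofReal (A x ξ) ∂φ then
    1 - (1 - (∫⁻ x in ball ξ (rejRad φ A ξ).toReal, ENNReal.ofReal (A x ξ) ∂φ).toReal) /
      (∫⁻ x in sphere ξ (rejRad φ A ξ).toReal, ENNReal.ofReal (A x ξ) ∂φ).toReal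
  else 0

/-- The rejection function built from the current application function `A`. -/
def rejFun {d : ℕ} (φ : Measure (Rd d)) (A : Rd d → Rd d → ℝ) (x ξ : Rd d) : ℝ :=
  if ENNReal.ofReal (dist x ξ) < rejRad φ A ξ then 0
  else if ENNReal.ofReal (dist x ξ) = rejRad φ A ξ then rejC φ A ξ * A x ξ
  else A x ξ

/-- `GS_R φ ψ n` is the rejection function `Rₙ` of the site-optimal Gale–Shapley
algorithm (so `GS_R φ ψ 0 = R₀ = 0`). -/
def GS_R {d : ℕ} (φ ψ : Measure (Rd d)) : ℕ → Rd d → Rd d → ℝ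
  | 0 => fun _ _ => 0
  | n + 1 => rejFun φ (appFun ψ (GS_R φ ψ n))

/-- `GS_A φ ψ n` is the application function `Aₙ₊₁` (the one built from `Rₙ`). -/
def GS_A {d : ℕ} (φ ψ : Measure (Rd d)) (n : ℕ) : Rd d → Rd d → ℝ :=
  appFun ψ (GS_R φ ψ n)

/-- `GS_a φ ψ n` is the application radius `aₙ₊₁`. -/
def GS_a {d : ℕ} (φ ψ : Measure (Rd d)) (n : ℕ) : Rd d → ℝ≥0∞ :=
  appRad ψ (GS_R φ ψ n)

/-- `GS_r φ ψ n` is the rejection radius `rₙ₊₁`. -/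
def GS_r {d : ℕ} (φ ψ : Measure (Rd d)) (n : ℕ) : Rd d → ℝ≥0∞ :=
  rejRad φ (GS_A φ ψ n)

/-- The limiting application function `A = limₙ Aₙ` (a monotone limit, hence a `⨆`). -/
def GS_Alim {d : ℕ} (φ ψ : Measure (Rd d)) (x ξ : Rd d) : ℝ := ⨆ n, GS_A φ ψ n x ξ

/-- The limiting rejection function `R = limₙ Rₙ` (a monotone limit, hence a `⨆`). -/
def GS_Rlim {d : ℕ} (φ ψ : Measure (Rd d)) (x ξ : Rd d) : ℝ := ⨆ n, GS_R φ ψ n x ξ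

/-- The site-optimal density `f_s = A − R` for `(φ, ψ)`. -/
def siteOptimal {d : ℕ} (φ ψ : Measure (Rd d)) (x ξ : Rd d) : ℝ :=
  GS_Alim φ ψ x ξ - GS_Rlim φ ψ x ξ

/-- The center-optimal density for `(φ, ψ)`. -/
def centerOptimal {d : ℕ} (φ ψ : Measure (Rd d)) (x ξ : Rd d) : ℝ :=
  siteOptimal ψ φ ξ x

/-- Assumption U. -/
def AssumptionU {d : ℕ} (φ ψ : Measure (Rd d)) : Prop :=
  (∀ᵐ x ∂φ, ∀ r : ℝ, 0 < r → ∃ s ∈ sphere x r, ψ (sphere x r \ {s}) = 0) ∧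
  (∀ᵐ ξ ∂ψ, ∀ r : ℝ, 0 < r → ∃ s ∈ sphere ξ r, φ (sphere ξ r \ {s}) = 0)

/-- A measurable flow on `Ω`. -/
def IsMeasurableFlow {Ω : Type*} [MeasurableSpace Ω] {d : ℕ} (θ : Rd d → Ω → Ω) : Prop :=
  Measurable (fun p : Rd d × Ω => θ p.1 p.2) ∧ θ 0 = id ∧
  ∀ s t : Rd d, θ s ∘ θ t = θ (s + t)

/-- `P` is invariant under the flow `θ`. -/
def IsFlowInvariant {Ω : Type*} [MeasurableSpace Ω] {d : ℕ} (θ : Rd d → Ω → Ω)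
    (P : Measure Ω) : Prop :=
  ∀ s, Measure.map (θ s) P = P

/-- `P` is ergodic for the flow `θ`. -/
def IsErgodicFlow {Ω : Type*} [MeasurableSpace Ω] {d : ℕ} (θ : Rd d → Ω → Ω)
    (P : Measure Ω) : Prop :=
  ∀ A : Set Ω, MeasurableSet A → (∀ s, θ s ⁻¹' A = A) → P A = 0 ∨ P A = 1

/-- A random measure: measurable and everywhere locally finite. -/
def IsRandomMeasure {Ω : Type*} [MeasurableSpace Ω] {d : ℕ} (Φ : Ω → Measure (Rd d)) : Prop :=
  (∀ B : Set (Rd d), MeasurableSet B → Measurable fun ω => Φ ω B) ∧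
  (∀ ω, LocFin (Φ ω))

/-- The random measure `Φ` is flow-adapted. -/
def FlowAdaptedMeasure {Ω : Type*} [MeasurableSpace Ω] {d : ℕ} (θ : Rd d → Ω → Ω)
    (Φ : Ω → Measure (Rd d)) : Prop :=
  ∀ ω s (B : Set (Rd d)), MeasurableSet B → Φ (θ s ω) B = Φ ω ((fun b => b + s) '' B)

/-- `Φ` has intensity `lam`. -/
def HasIntensity {Ω : Type*} [MeasurableSpace Ω] {d : ℕ} (P : Measure Ω)
    (Φ : Ω → Measure (Rd d)) (lam : ℝ≥0∞) : Prop :=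
  ∀ B : Set (Rd d), MeasurableSet B → ∫⁻ ω, Φ ω B ∂P = lam * volume B

/-- A flow-adapted jointly measurable function `F : Ω × ℝ^d × ℝ^d → ℝ`. -/
def FlowAdaptedKernel {Ω : Type*} [MeasurableSpace Ω] {d : ℕ} (θ : Rd d → Ω → Ω)
    (F : Ω → Rd d → Rd d → ℝ) : Prop :=
  Measurable (fun p : Ω × Rd d × Rd d => F p.1 p.2.1 p.2.2) ∧
  ∀ ω s x ξ, F (θ s ω) x ξ = F ω (x + s) (ξ + s)

/-- The shift `θ_t μ` of a measure: `(θ_t μ)(B) = μ(B + t)`. -/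
def shiftMeasure {d : ℕ} (t : Rd d) (μ : Measure (Rd d)) : Measure (Rd d) :=
  Measure.map (fun x => x - t) μ

/-- `s(x)` of the Voronoi transport kernel. -/
def vRad {d : ℕ} (ψ : Measure (Rd d)) (x : Rd d) : ℝ≥0∞ :=
  sSup (ENNReal.ofReal '' {s : ℝ | 0 ≤ s ∧ ψ (closedBall x s) ≤ 1})

/-- The boundary weight `c(x)` of the Voronoi density. -/
def vC {d : ℕ} (ψ : Measure (Rd d)) (x : Rd d) : ℝ :=
  if vRad ψ x ≠ ⊤ ∧ 0 < ψ (sphere x (vRad ψ x).toReal) then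
    (1 - (ψ (ball x (vRad ψ x).toReal)).toReal) / (ψ (sphere x (vRad ψ x).toReal)).toReal
  else 1

/-- The Voronoi density with respect to `ψ`. -/
def voronoiDensity {d : ℕ} (ψ : Measure (Rd d)) (x ξ : Rd d) : ℝ :=
  if ENNReal.ofReal (dist x ξ) < vRad ψ x then 1
  else if ENNReal.ofReal (dist x ξ) = vRad ψ x then vC ψ x
  else 0

/-- The Voronoi territory of `ξ` with respect to `ψ`. -/
def voronoiTerritory {d : ℕ} (ψ : Measure (Rd d)) (ξ : Rd d) : Set (Rd d) :=
  {x | 0 < voronoiDensity ψ x ξ}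

/-- The (topological) support of a measure. -/
def msupport {d : ℕ} (ψ : Measure (Rd d)) : Set (Rd d) := {x | ∀ U ∈ 𝓝 x, 0 < ψ U}

open Set

section UnitRadius

variable {E : Type*} [PseudoMetricSpace E] [MeasurableSpace E]
  {ν ν' : Measure E} {z : E}

def unitRadius (ν : Measure E) (z : E) : ℝ≥0∞ :=
  sSup (ENNReal.ofReal '' {a : ℝ | 0 ≤ a ∧ ν (closedBall z a) ≤ 1})

lemma unitRadius_anti (h : ν ≤ ν') : unitRadius ν' z ≤ unitRadius ν z :=
  sSup_le_sSup <| image_mono fun _ ha => ⟨ha.1, (h _).trans ha.2⟩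

lemma measure_closedBall_le_one_of_lt_unitRadius {a : ℝ}
    (h : ENNReal.ofReal a < unitRadius ν z) : ν (closedBall z a) ≤ 1 := by
  obtain ⟨_, ⟨b, ⟨-, hb⟩, rfl⟩, hab⟩ := lt_sSup_iff.1 h
  exact (measure_mono (closedBall_subset_closedBall
    (ENNReal.ofReal_lt_ofReal_iff'.1 hab).1.le)).trans hb

lemma one_lt_measure_closedBall_of_unitRadius_lt {a : ℝ}
    (h : unitRadius ν z < ENNReal.ofReal a) : 1 < ν (closedBall z a) := by
  by_contra! hle
  have ha : 0 < a := ENNReal.ofReal_pos.1 (zero_le.trans_lt h)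
  exact h.not_ge (le_sSup ⟨a, ⟨ha.le, hle⟩, rfl⟩)

lemma measure_ball_unitRadius_le_one [OpensMeasurableSpace E] :
    ν (ball z (unitRadius ν z).toReal) ≤ 1 := by
  set ρ := (unitRadius ν z).toReal
  rcases le_or_gt ρ 0 with hρ | hρ
  · simp [ball_eq_empty.2 hρ]
  obtain ⟨u, hu_mono, hu_mem, hu_lim⟩ := exists_seq_strictMono_tendsto' hρ
  have hball : ball z ρ = ⋃ n, closedBall z (u n) := by
    refine subset_antisymm (fun y hy => ?_) (iUnion_subset fun n =>
      closedBall_subset_ball (hu_mem n).2)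
    obtain ⟨n, hn⟩ := (hu_lim.eventually (lt_mem_nhds (mem_ball.1 hy))).exists
    exact mem_iUnion.2 ⟨n, mem_closedBall.2 hn.le⟩
  rw [hball, Monotone.measure_iUnion fun m n hmn =>
    closedBall_subset_closedBall (hu_mono.monotone hmn)]
  refine iSup_le fun n => measure_closedBall_le_one_of_lt_unitRadius ?_
  exact ((ENNReal.ofReal_lt_ofReal_iff hρ).2 (hu_mem n).2).trans_le ENNReal.ofReal_toReal_le

lemma one_le_measure_closedBall_unitRadius [OpensMeasurableSpace E]
    (hν : ∀ r, ν (closedBall z r) ≠ ∞) (hρ : unitRadius ν z ≠ ⊤) :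
    1 ≤ ν (closedBall z (unitRadius ν z).toReal) := by
  set ρ := (unitRadius ν z).toReal
  have hlim := tendsto_measure_biInter_gt (μ := ν) (s := closedBall z) (a := ρ)
    (fun _ _ => measurableSet_closedBall.nullMeasurableSet)
    (fun _ _ _ hij => closedBall_subset_closedBall hij) ⟨ρ + 1, by linarith, hν _⟩
  rw [biInter_gt_closedBall] at hlim
  refine ge_of_tendsto hlim (eventually_nhdsWithin_of_forall fun r (hr : ρ < r) =>
    (one_lt_measure_closedBall_of_unitRadius_lt ?_).le)
  rw [← ENNReal.ofReal_toReal hρ]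
  exact ENNReal.ofReal_lt_ofReal_iff'.2 ⟨hr, ENNReal.toReal_nonneg.trans_lt hr⟩

lemma measure_closedBall_eq_ball_add_sphere [OpensMeasurableSpace E] (r : ℝ) :
    ν (closedBall z r) = ν (ball z r) + ν (sphere z r) := by
  rw [← ball_union_sphere, measure_union sphere_disjoint_ball.symm isClosed_sphere.measurableSet]

end UnitRadius

section BoundaryFraction

variable {E : Type*} [PseudoMetricSpace E] [MeasurableSpace E] [OpensMeasurableSpace E]
  {ν ν' : Measure E} {z : E}

/-- Vanishes when the sphere is null (real division by zero), matching the default `c = 1` of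
`appC`. -/
def boundaryFraction (ν : Measure E) (z : E) : ℝ :=
  (1 - (ν (ball z (unitRadius ν z).toReal)).toReal) / (ν (sphere z (unitRadius ν z).toReal)).toReal

lemma toReal_measure_ball_unitRadius_le_one : (ν (ball z (unitRadius ν z).toReal)).toReal ≤ 1 :=
  ENNReal.toReal_le_of_le_ofReal zero_le_one (by simpa using measure_ball_unitRadius_le_one)

lemma one_le_toReal_measure_ball_add_sphere_unitRadius (hν : ∀ r, ν (closedBall z r) ≠ ∞)
    (hρ : unitRadius ν z ≠ ⊤) :
    1 ≤ (ν (ball z (unitRadius ν z).toReal)).toReal +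
      (ν (sphere z (unitRadius ν z).toReal)).toReal := by
  have hsum := one_le_measure_closedBall_unitRadius hν hρ
  have hfin := hν (unitRadius ν z).toReal
  rw [measure_closedBall_eq_ball_add_sphere] at hsum hfin
  rw [← ENNReal.toReal_add (ENNReal.add_ne_top.1 hfin).1 (ENNReal.add_ne_top.1 hfin).2]
  simpa using ENNReal.toReal_mono hfin hsum

lemma boundaryFraction_nonneg : 0 ≤ boundaryFraction ν z :=
  div_nonneg (sub_nonneg.2 toReal_measure_ball_unitRadius_le_one) ENNReal.toReal_nonneg

lemma boundaryFraction_le_one (hν : ∀ r, ν (closedBall z r) ≠ ∞) (hρ : unitRadius ν z ≠ ⊤) :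
    boundaryFraction ν z ≤ 1 :=
  div_le_one_of_le₀ (by linarith [one_le_toReal_measure_ball_add_sphere_unitRadius hν hρ])
    ENNReal.toReal_nonneg

/-- At an unchanged radius the ball needs less from a sphere that offers more. -/
lemma boundaryFraction_anti (h : ν ≤ ν') (hρ : unitRadius ν z = unitRadius ν' z)
    (hne : unitRadius ν z ≠ ⊤) (hν' : ∀ r, ν' (closedBall z r) ≠ ∞) :
    boundaryFraction ν' z ≤ boundaryFraction ν z := by
  have hsum := one_le_toReal_measure_ball_add_sphere_unitRadius
    (fun r => ne_top_of_le_ne_top (hν' r) (h _)) hne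
  have hB' := toReal_measure_ball_unitRadius_le_one (ν := ν') (z := z)
  unfold boundaryFraction
  rw [← hρ] at hB' ⊢
  set ρ := (unitRadius ν z).toReal
  have hBB' : (ν (ball z ρ)).toReal ≤ (ν' (ball z ρ)).toReal :=
    ENNReal.toReal_mono (ne_top_of_le_ne_top (hν' ρ) (measure_mono ball_subset_closedBall)) (h _)
  have hSS' : (ν (sphere z ρ)).toReal ≤ (ν' (sphere z ρ)).toReal :=
    ENNReal.toReal_mono (ne_top_of_le_ne_top (hν' ρ) (measure_mono sphere_subset_closedBall)) (h _)
  rcases (ENNReal.toReal_nonneg (a := ν (sphere z ρ))).eq_or_lt with hS0 | hSpos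
  · rw [← hS0, div_zero]
    exact div_nonpos_of_nonpos_of_nonneg (by linarith) ENNReal.toReal_nonneg
  · calc (1 - (ν' (ball z ρ)).toReal) / (ν' (sphere z ρ)).toReal
        ≤ (1 - (ν (ball z ρ)).toReal) / (ν' (sphere z ρ)).toReal :=
          div_le_div_of_nonneg_right (by linarith) ENNReal.toReal_nonneg
      _ ≤ (1 - (ν (ball z ρ)).toReal) / (ν (sphere z ρ)).toReal :=
          div_le_div_of_nonneg_left (by linarith) hSpos hSS'

end BoundaryFraction

lemma LocFin.withDensity_closedBall_ne_top {d : ℕ} {μ : Measure (Rd d)} (hμ : LocFin μ)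
    {F : Rd d → ℝ≥0∞} (hF : ∀ y, F y ≤ 1) (z : Rd d) (r : ℝ) :
    μ.withDensity F (closedBall z r) ≠ ∞ := by
  refine ne_top_of_le_ne_top (hμ (closedBall z r) isBounded_closedBall).ne ?_
  calc μ.withDensity F (closedBall z r) ≤ μ.withDensity 1 (closedBall z r) :=
        withDensity_mono (Eventually.of_forall hF) _
    _ = μ (closedBall z r) := by rw [withDensity_one]

section GaleShapleyStep

variable {d : ℕ} {φ ψ : Measure (Rd d)}

def appMeasure (ψ : Measure (Rd d)) (Rp : Rd d → Rd d → ℝ) (x : Rd d) : Measure (Rd d) :=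
  ψ.withDensity fun ξ => ENNReal.ofReal (1 - Rp x ξ)

def rejMeasure (φ : Measure (Rd d)) (A : Rd d → Rd d → ℝ) (ξ : Rd d) : Measure (Rd d) :=
  φ.withDensity fun x => ENNReal.ofReal (A x ξ)

lemma appRad_eq_unitRadius (ψ : Measure (Rd d)) (Rp : Rd d → Rd d → ℝ) (x : Rd d) :
    appRad ψ Rp x = unitRadius (appMeasure ψ Rp x) x := by
  simp only [appRad, unitRadius, appMeasure, withDensity_apply _ measurableSet_closedBall]

lemma rejRad_eq_unitRadius (φ : Measure (Rd d)) (A : Rd d → Rd d → ℝ) (ξ : Rd d) :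
    rejRad φ A ξ = unitRadius (rejMeasure φ A ξ) ξ := by
  simp only [rejRad, unitRadius, rejMeasure, withDensity_apply _ measurableSet_closedBall]

lemma appC_eq {Rp : Rd d → Rd d → ℝ} {x : Rd d} (hρ : appRad ψ Rp x ≠ ⊤) :
    appC ψ Rp x = 1 - boundaryFraction (appMeasure ψ Rp x) x := by
  rw [appC, boundaryFraction, ← appRad_eq_unitRadius, appMeasure,
    withDensity_apply _ measurableSet_ball, withDensity_apply _ isClosed_sphere.measurableSet]
  split_ifs with h
  · rfl
  · simp [le_zero_iff.1 (not_lt.1 fun hS => h ⟨hρ, hS⟩)]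

lemma rejC_eq {A : Rd d → Rd d → ℝ} {ξ : Rd d} (hρ : rejRad φ A ξ ≠ ⊤) :
    rejC φ A ξ = if 0 < rejMeasure φ A ξ (sphere ξ (rejRad φ A ξ).toReal)
      then 1 - boundaryFraction (rejMeasure φ A ξ) ξ else 0 := by
  rw [rejC, boundaryFraction, ← rejRad_eq_unitRadius, rejMeasure,
    withDensity_apply _ measurableSet_ball, withDensity_apply _ isClosed_sphere.measurableSet]
  simp only [ne_eq, hρ, not_false_eq_true, true_and]


lemma appMeasure_closedBall_ne_top (hψ : LocFin ψ) {Rp : Rd d → Rd d → ℝ} {x : Rd d}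
    (h0 : ∀ ξ, 0 ≤ Rp x ξ) (r : ℝ) : appMeasure ψ Rp x (closedBall x r) ≠ ∞ :=
  hψ.withDensity_closedBall_ne_top (fun ξ => ENNReal.ofReal_le_one.2 (by linarith [h0 ξ])) x r

lemma rejMeasure_closedBall_ne_top (hφ : LocFin φ) {A : Rd d → Rd d → ℝ} {ξ : Rd d}
    (h1 : ∀ x, A x ξ ≤ 1) (r : ℝ) : rejMeasure φ A ξ (closedBall ξ r) ≠ ∞ :=
  hφ.withDensity_closedBall_ne_top (fun x => ENNReal.ofReal_le_one.2 (h1 x)) ξ r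

lemma appMeasure_anti {f g : Rd d → Rd d → ℝ} {x : Rd d} (h : ∀ ξ, f x ξ ≤ g x ξ) :
    appMeasure ψ g x ≤ appMeasure ψ f x :=
  withDensity_mono (Eventually.of_forall fun ξ => ENNReal.ofReal_le_ofReal (by linarith [h ξ]))

lemma rejMeasure_mono {A A' : Rd d → Rd d → ℝ} {ξ : Rd d} (h : ∀ x, A x ξ ≤ A' x ξ) :
    rejMeasure φ A ξ ≤ rejMeasure φ A' ξ :=
  withDensity_mono (Eventually.of_forall fun x => ENNReal.ofReal_le_ofReal (h x))

lemma appRad_mono {f g : Rd d → Rd d → ℝ} {x : Rd d} (h : ∀ ξ, f x ξ ≤ g x ξ) :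
    appRad ψ f x ≤ appRad ψ g x := by
  simpa only [appRad_eq_unitRadius] using unitRadius_anti (appMeasure_anti (ψ := ψ) h)

lemma rejRad_anti {A A' : Rd d → Rd d → ℝ} {ξ : Rd d} (h : ∀ x, A x ξ ≤ A' x ξ) :
    rejRad φ A' ξ ≤ rejRad φ A ξ := by
  simpa only [rejRad_eq_unitRadius] using unitRadius_anti (rejMeasure_mono (φ := φ) h)

lemma appC_mem_Icc (hψ : LocFin ψ) {Rp : Rd d → Rd d → ℝ} {x : Rd d} (h0 : ∀ ξ, 0 ≤ Rp x ξ)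
    (hρ : appRad ψ Rp x ≠ ⊤) : appC ψ Rp x ∈ Icc 0 1 := by
  rw [appC_eq hρ]
  rw [appRad_eq_unitRadius] at hρ
  exact ⟨sub_nonneg.2 (boundaryFraction_le_one (appMeasure_closedBall_ne_top hψ h0) hρ),
    sub_le_self _ boundaryFraction_nonneg⟩

lemma rejC_mem_Icc (hφ : LocFin φ) {A : Rd d → Rd d → ℝ} {ξ : Rd d} (h1 : ∀ x, A x ξ ≤ 1)
    (hρ : rejRad φ A ξ ≠ ⊤) : rejC φ A ξ ∈ Icc 0 1 := by
  rw [rejC_eq hρ]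
  rw [rejRad_eq_unitRadius] at hρ
  split_ifs
  · exact ⟨sub_nonneg.2 (boundaryFraction_le_one (rejMeasure_closedBall_ne_top hφ h1) hρ),
      sub_le_self _ boundaryFraction_nonneg⟩
  · exact ⟨le_rfl, zero_le_one⟩

lemma appC_anti (hψ : LocFin ψ) {f g : Rd d → Rd d → ℝ} {x : Rd d} (h0 : ∀ ξ, 0 ≤ f x ξ)
    (hfg : ∀ ξ, f x ξ ≤ g x ξ) (hρ : appRad ψ f x = appRad ψ g x) (hne : appRad ψ f x ≠ ⊤) :
    appC ψ g x ≤ appC ψ f x := by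
  rw [appC_eq hne, appC_eq (hρ ▸ hne)]
  rw [appRad_eq_unitRadius, appRad_eq_unitRadius] at hρ
  rw [appRad_eq_unitRadius] at hne
  linarith [boundaryFraction_anti (appMeasure_anti hfg) hρ.symm (hρ ▸ hne)
    (appMeasure_closedBall_ne_top hψ h0)]

lemma rejC_mono (hφ : LocFin φ) {A A' : Rd d → Rd d → ℝ} {ξ : Rd d}
    (hAA' : ∀ x, A x ξ ≤ A' x ξ) (h1 : ∀ x, A' x ξ ≤ 1) (hρ : rejRad φ A ξ = rejRad φ A' ξ)
    (hne : rejRad φ A ξ ≠ ⊤) : rejC φ A ξ ≤ rejC φ A' ξ := by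
  have hmono := rejMeasure_mono (φ := φ) hAA'
  rw [rejC_eq hne, rejC_eq (hρ ▸ hne), hρ]
  rw [rejRad_eq_unitRadius, rejRad_eq_unitRadius] at hρ
  rw [rejRad_eq_unitRadius] at hne
  split_ifs with hS hS'
  · linarith [boundaryFraction_anti hmono hρ hne (rejMeasure_closedBall_ne_top hφ h1)]
  · exact absurd (hS.trans_le (hmono _)) hS'
  · exact sub_nonneg.2 (boundaryFraction_le_one (rejMeasure_closedBall_ne_top hφ h1) (hρ ▸ hne))
  · exact le_rfl

end GaleShapleyStep

section GaleShapleyFunctions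

variable {d : ℕ} {φ ψ : Measure (Rd d)}

lemma appFun_mem_Icc (hψ : LocFin ψ) {Rp : Rd d → Rd d → ℝ} {x : Rd d}
    (hR : ∀ ξ, Rp x ξ ∈ Icc 0 1) (ξ : Rd d) : appFun ψ Rp x ξ ∈ Icc 0 1 := by
  unfold appFun
  split_ifs with hlt heq
  · exact right_mem_Icc.2 zero_le_one
  · obtain ⟨hc0, hc1⟩ := appC_mem_Icc hψ (fun η => (hR η).1) (heq ▸ ENNReal.ofReal_ne_top)
    obtain ⟨hR0, hR1⟩ := hR ξ
    constructor <;> nlinarith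
  · exact left_mem_Icc.2 zero_le_one

lemma rejFun_mem_Icc (hφ : LocFin φ) {A : Rd d → Rd d → ℝ} {ξ : Rd d}
    (hA : ∀ x, A x ξ ∈ Icc 0 1) (x : Rd d) : rejFun φ A x ξ ∈ Icc 0 (A x ξ) := by
  unfold rejFun
  split_ifs with hlt heq
  · exact left_mem_Icc.2 (hA x).1
  · obtain ⟨hc0, hc1⟩ := rejC_mem_Icc hφ (fun y => (hA y).2) (heq ▸ ENNReal.ofReal_ne_top)
    exact ⟨mul_nonneg hc0 (hA x).1, mul_le_of_le_one_left (hA x).1 hc1⟩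
  · exact right_mem_Icc.2 (hA x).1

lemma appFun_mono (hψ : LocFin ψ) {f g : Rd d → Rd d → ℝ} {x : Rd d} (h0 : ∀ ξ, 0 ≤ f x ξ)
    (hfg : ∀ ξ, f x ξ ≤ g x ξ) (h1 : ∀ ξ, g x ξ ≤ 1) (ξ : Rd d) :
    appFun ψ f x ξ ≤ appFun ψ g x ξ := by
  have hf : ∀ η, f x η ∈ Icc 0 1 := fun η => ⟨h0 η, (hfg η).trans (h1 η)⟩
  have hg : ∀ η, g x η ∈ Icc 0 1 := fun η => ⟨(h0 η).trans (hfg η), h1 η⟩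
  have hrad : appRad ψ f x ≤ appRad ψ g x := appRad_mono hfg
  rcases lt_trichotomy (ENNReal.ofReal (dist x ξ)) (appRad ψ f x) with hlt | heq | hgt
  · simp only [appFun, if_pos hlt, if_pos (hlt.trans_le hrad), le_refl]
  · rcases (heq.le.trans hrad).lt_or_eq with hlt' | heq'
    · simpa only [appFun, if_pos hlt'] using (appFun_mem_Icc hψ hf ξ).2
    · have hne : appRad ψ f x ≠ ⊤ := heq ▸ ENNReal.ofReal_ne_top
      have hc := appC_anti hψ h0 hfg (heq.symm.trans heq') hne
      have hcg := (appC_mem_Icc hψ (fun η => (hg η).1) (heq' ▸ ENNReal.ofReal_ne_top)).1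
      simp only [appFun, ← heq, ← heq', lt_irrefl, if_false, if_true]
      nlinarith [hfg ξ, h1 ξ]
  · simpa only [appFun, if_neg (not_lt.2 hgt.le), if_neg hgt.ne'] using (appFun_mem_Icc hψ hg ξ).1

lemma rejFun_mono (hφ : LocFin φ) {A A' : Rd d → Rd d → ℝ} {ξ : Rd d} (h0 : ∀ x, 0 ≤ A x ξ)
    (hAA' : ∀ x, A x ξ ≤ A' x ξ) (h1 : ∀ x, A' x ξ ≤ 1) (x : Rd d) :
    rejFun φ A x ξ ≤ rejFun φ A' x ξ := by
  have hA : ∀ y, A y ξ ∈ Icc 0 1 := fun y => ⟨h0 y, (hAA' y).trans (h1 y)⟩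
  have hA' : ∀ y, A' y ξ ∈ Icc 0 1 := fun y => ⟨(h0 y).trans (hAA' y), h1 y⟩
  have hrad : rejRad φ A' ξ ≤ rejRad φ A ξ := rejRad_anti hAA'
  rcases lt_trichotomy (ENNReal.ofReal (dist x ξ)) (rejRad φ A' ξ) with hlt | heq | hgt
  · simp only [rejFun, if_pos hlt, if_pos (hlt.trans_le hrad), le_refl]
  · rcases (heq.le.trans hrad).lt_or_eq with hlt' | heq'
    · simpa only [rejFun, if_pos hlt'] using (rejFun_mem_Icc hφ hA' x).1
    · have hne : rejRad φ A ξ ≠ ⊤ := heq' ▸ ENNReal.ofReal_ne_top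
      have hc := rejC_mono hφ hAA' h1 (heq'.symm.trans heq) hne
      have hc' := (rejC_mem_Icc hφ h1 (heq ▸ ENNReal.ofReal_ne_top)).1
      simp only [rejFun, ← heq, ← heq', lt_irrefl, if_false, if_true]
      exact mul_le_mul hc (hAA' x) (h0 x) hc'
  · simpa only [rejFun, if_neg (not_lt.2 hgt.le), if_neg hgt.ne'] using
      (rejFun_mem_Icc hφ hA x).2.trans (hAA' x)

end GaleShapleyFunctions

lemma Monotone.exists_tendsto_mem_Icc {u : ℕ → ℝ} {a b : ℝ} (hu : Monotone u)
    (h : ∀ n, u n ∈ Icc a b) : ∃ L ∈ Icc a b, Tendsto u atTop (𝓝 L) := by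
  have hlim := tendsto_atTop_ciSup hu ⟨b, by rintro _ ⟨n, rfl⟩; exact (h n).2⟩
  exact ⟨_, isClosed_Icc.mem_of_tendsto hlim (Eventually.of_forall h), hlim⟩

section GaleShapleyIteration

variable {d : ℕ} {φ ψ : Measure (Rd d)}

lemma GS_R_mem_Icc (hφ : LocFin φ) (hψ : LocFin ψ) (n : ℕ) (x ξ : Rd d) :
    GS_R φ ψ n x ξ ∈ Icc 0 1 := by
  induction n generalizing x ξ with
  | zero => exact left_mem_Icc.2 zero_le_one
  | succ n ih =>
    have hA : ∀ y, GS_A φ ψ n y ξ ∈ Icc 0 1 := fun y => appFun_mem_Icc hψ (ih y) ξ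
    exact ⟨(rejFun_mem_Icc hφ hA x).1, (rejFun_mem_Icc hφ hA x).2.trans (hA x).2⟩

lemma GS_A_mem_Icc (hφ : LocFin φ) (hψ : LocFin ψ) (n : ℕ) (x ξ : Rd d) :
    GS_A φ ψ n x ξ ∈ Icc 0 1 :=
  appFun_mem_Icc hψ (GS_R_mem_Icc hφ hψ n x) ξ

lemma GS_R_le_succ (hφ : LocFin φ) (hψ : LocFin ψ) (n : ℕ) (x ξ : Rd d) :
    GS_R φ ψ n x ξ ≤ GS_R φ ψ (n + 1) x ξ := by
  induction n generalizing x ξ with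
  | zero => exact (GS_R_mem_Icc hφ hψ 1 x ξ).1
  | succ n ih =>
    refine rejFun_mono hφ (fun y => (GS_A_mem_Icc hφ hψ n y ξ).1) (fun y => ?_)
      (fun y => (GS_A_mem_Icc hφ hψ (n + 1) y ξ).2) x
    exact appFun_mono hψ (fun η => (GS_R_mem_Icc hφ hψ n y η).1) (ih y)
      (fun η => (GS_R_mem_Icc hφ hψ (n + 1) y η).2) ξ

lemma GS_A_le_succ (hφ : LocFin φ) (hψ : LocFin ψ) (n : ℕ) (x ξ : Rd d) :
    GS_A φ ψ n x ξ ≤ GS_A φ ψ (n + 1) x ξ :=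
  appFun_mono hψ (fun η => (GS_R_mem_Icc hφ hψ n x η).1) (GS_R_le_succ hφ hψ n x)
    (fun η => (GS_R_mem_Icc hφ hψ (n + 1) x η).2) ξ

end GaleShapleyIteration

/-- Monotonicity of the Gale–Shapley quantities and existence of the
limits `A` and `R` with values in `[0,1]`.  (Here `GS_a φ ψ n = aₙ₊₁`, `GS_A φ ψ n = Aₙ₊₁`,
`GS_r φ ψ n = rₙ₊₁` and `GS_R φ ψ n = Rₙ`.) -/
theorem stmt1 {d : ℕ} (φ ψ : Measure (Rd d)) (hφ : LocFin φ) (hψ : LocFin ψ) :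
    (∀ (n : ℕ) (x : Rd d), GS_a φ ψ n x ≤ GS_a φ ψ (n + 1) x) ∧
    (∀ (n : ℕ) (x ξ : Rd d), GS_A φ ψ n x ξ ≤ GS_A φ ψ (n + 1) x ξ) ∧
    (∀ (n : ℕ) (ξ : Rd d), GS_r φ ψ (n + 1) ξ ≤ GS_r φ ψ n ξ) ∧
    (∀ (n : ℕ) (x ξ : Rd d), GS_R φ ψ n x ξ ≤ GS_R φ ψ (n + 1) x ξ) ∧
    (∀ x ξ : Rd d, ∃ L ∈ Set.Icc (0 : ℝ) 1,
      Tendsto (fun n => GS_A φ ψ n x ξ) atTop (𝓝 L)) ∧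
    (∀ x ξ : Rd d, ∃ L ∈ Set.Icc (0 : ℝ) 1,
      Tendsto (fun n => GS_R φ ψ n x ξ) atTop (𝓝 L)) :=
  ⟨fun n x => appRad_mono (GS_R_le_succ hφ hψ n x),
    GS_A_le_succ hφ hψ,
    fun n ξ => rejRad_anti fun x => GS_A_le_succ hφ hψ n x ξ,
    GS_R_le_succ hφ hψ,
    fun x ξ => (monotone_nat_of_le_succ fun n => GS_A_le_succ hφ hψ n x ξ).exists_tendsto_mem_Icc
      (fun n => GS_A_mem_Icc hφ hψ n x ξ),
    fun x ξ => (monotone_nat_of_le_succ fun n => GS_R_le_succ hφ hψ n x ξ).exists_tendsto_mem_Icc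
      (fun n => GS_R_mem_Icc hφ hψ n x ξ)⟩
end
end

section
/- The site-optimal density f_s for (φ,ψ) is a stable constrained density for (φ,ψ). -/
open MeasureTheory Filter Metric Bornology
open scoped ENNReal NNReal Topology

noncomputable section

attribute [local instance] Classical.propDecidable

/-!
Both steps of the algorithm fill a ball around a point with a weighted measure: take the largest
radius whose closed ball has mass at most one and add the fraction of the boundary sphere that
brings the mass to exactly one. Lowering the weights enlarges both the radius and the boundary
fraction; by induction `Aₙ` and `Rₙ` therefore increase with `n`. Each `Aₙ - Rₙ₋₁` has mass at most
one at every site and each `Aₙ - Rₙ` at every center (exactly one when the radius is finite), and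
Fatou's lemma passes these bounds to `A - R`.

If a site `x` desires a center `ξ` then `A(x, ξ) = 1`. Either `x` keeps part of a farther center,
which it could only reach after its application radius had passed `|x - ξ|`, or `x` is unexhausted.
In the second case its radii are unbounded: were they bounded, the mass-one identities for
`Aₙ - Rₙ₋₁` on a fixed ball would pass to the limit by dominated convergence and exhaust `x`.
Symmetrically, if `ξ` desires `x` then every rejection radius of `ξ` exceeds `|x - ξ|`, so
`R(x, ξ) = 0`. Then `f_s(x, ξ) = 1`, so `x` cannot desire `ξ`.
-/

namespace GaleShapley

open Set Function

section FillRadius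

variable {α : Type*} [PseudoMetricSpace α] [MeasurableSpace α]
  {ν ν' : Measure α} {c : α}

def fillRadius (ν : Measure α) (c : α) : ℝ≥0∞ :=
  sSup (ENNReal.ofReal '' {a : ℝ | 0 ≤ a ∧ ν (closedBall c a) ≤ 1})

theorem le_fillRadius {a : ℝ} (ha : 0 ≤ a) (h : ν (closedBall c a) ≤ 1) :
    ENNReal.ofReal a ≤ fillRadius ν c :=
  le_sSup ⟨a, ⟨ha, h⟩, rfl⟩

theorem measure_closedBall_le_one_of_lt_fillRadius {a : ℝ}
    (h : ENNReal.ofReal a < fillRadius ν c) : ν (closedBall c a) ≤ 1 := by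
  obtain ⟨_, ⟨b, ⟨-, hb⟩, rfl⟩, hab⟩ := lt_sSup_iff.mp h
  exact (measure_mono (closedBall_subset_closedBall
    (ENNReal.ofReal_lt_ofReal_iff'.mp hab).1.le)).trans hb

theorem one_lt_measure_closedBall_of_fillRadius_lt {a : ℝ}
    (h : fillRadius ν c < ENNReal.ofReal a) : 1 < ν (closedBall c a) := by
  have ha : 0 ≤ a := by
    by_contra ha
    simp [ENNReal.ofReal_of_nonpos (not_le.1 ha).le] at h
  by_contra hν
  exact h.not_ge (le_fillRadius ha (not_lt.1 hν))

theorem fillRadius_anti (h : ν ≤ ν') : fillRadius ν' c ≤ fillRadius ν c :=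
  sSup_le_sSup (image_mono fun _ ⟨ha, hν⟩ => ⟨ha, (Measure.le_iff'.1 h _).trans hν⟩)

theorem measure_ball_le_of_forall_lt {t : ℝ} {m : ℝ≥0∞}
    (h : ∀ a < t, ν (closedBall c a) ≤ m) : ν (ball c t) ≤ m := by
  have hmono : Monotone fun n : ℕ => closedBall c (t - 1 / (n + 1)) := fun i j hij =>
    closedBall_subset_closedBall (by gcongr)
  have hunion : ⋃ n : ℕ, closedBall c (t - 1 / (n + 1)) = ball c t := by
    ext y
    simp only [mem_iUnion, mem_closedBall, mem_ball]
    constructor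
    · rintro ⟨n, hn⟩
      linarith [Nat.one_div_pos_of_nat (α := ℝ) (n := n)]
    · intro hy
      obtain ⟨n, hn⟩ := exists_nat_one_div_lt (sub_pos.2 hy)
      exact ⟨n, by linarith⟩
  rw [← hunion, hmono.measure_iUnion]
  exact iSup_le fun n => h _ (by linarith [Nat.one_div_pos_of_nat (α := ℝ) (n := n)])

theorem le_measure_closedBall_of_forall_gt [OpensMeasurableSpace α] {t : ℝ} {m : ℝ≥0∞}
    (hfin : ν (closedBall c (t + 1)) ≠ ∞) (h : ∀ a > t, m ≤ ν (closedBall c a)) :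
    m ≤ ν (closedBall c t) := by
  have hlim := tendsto_measure_biInter_gt (μ := ν) (s := closedBall c) (a := t)
    (fun _ _ => measurableSet_closedBall.nullMeasurableSet)
    (fun _ _ _ hij => closedBall_subset_closedBall hij) ⟨t + 1, by linarith, hfin⟩
  rw [biInter_gt_closedBall] at hlim
  exact ge_of_tendsto hlim (eventually_nhdsWithin_of_forall h)

theorem measure_ball_fillRadius_le_one : ν (ball c (fillRadius ν c).toReal) ≤ 1 := by
  refine measure_ball_le_of_forall_lt fun a ha => ?_
  rcases lt_or_ge a 0 with ha0 | ha0
  · simp [closedBall_eq_empty.2 ha0]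
  have hR : fillRadius ν c ≠ ⊤ := by
    intro h
    simp [h] at ha
    linarith
  exact measure_closedBall_le_one_of_lt_fillRadius ((ENNReal.ofReal_lt_iff_lt_toReal ha0 hR).2 ha)

theorem one_le_measure_closedBall_fillRadius [OpensMeasurableSpace α]
    (hfin : ∀ r, ν (closedBall c r) ≠ ∞) (hR : fillRadius ν c ≠ ⊤) :
    1 ≤ ν (closedBall c (fillRadius ν c).toReal) :=
  le_measure_closedBall_of_forall_gt (hfin _) fun _ ha =>
    (one_lt_measure_closedBall_of_fillRadius_lt ((ENNReal.lt_ofReal_iff_toReal_lt hR).2 ha)).le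

theorem measure_univ_le_one_of_fillRadius_eq_top (hR : fillRadius ν c = ⊤) : ν univ ≤ 1 := by
  have hmono : Monotone fun n : ℕ => closedBall c n := fun _ _ hij =>
    closedBall_subset_closedBall (Nat.cast_le.2 hij)
  rw [← iUnion_closedBall_nat c, hmono.measure_iUnion]
  exact iSup_le fun n => measure_closedBall_le_one_of_lt_fillRadius (hR ▸ ENNReal.ofReal_lt_top)

theorem measure_closedBall_eq_ball_add_sphere [OpensMeasurableSpace α] (r : ℝ) :
    ν (closedBall c r) = ν (ball c r) + ν (sphere c r) := by
  rw [← ball_union_sphere, measure_union _ isClosed_sphere.measurableSet]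
  exact Set.disjoint_left.2 fun y hb hs => (mem_ball.1 hb).ne (mem_sphere.1 hs)

theorem toReal_measure_ball_fillRadius_le_one :
    (ν (ball c (fillRadius ν c).toReal)).toReal ≤ 1 :=
  ENNReal.toReal_le_of_le_ofReal zero_le_one (by simpa using measure_ball_fillRadius_le_one)

theorem measure_ball_fillRadius_eq_one_of_sphere [OpensMeasurableSpace α]
    (hfin : ∀ r, ν (closedBall c r) ≠ ∞) (hR : fillRadius ν c ≠ ⊤)
    (hs : ν (sphere c (fillRadius ν c).toReal) = 0) :
    ν (ball c (fillRadius ν c).toReal) = 1 := by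
  refine le_antisymm measure_ball_fillRadius_le_one ?_
  simpa [measure_closedBall_eq_ball_add_sphere, hs] using
    one_le_measure_closedBall_fillRadius hfin hR

/-- Equal to `0` when the sphere is `ν`-null (`x / 0 = 0`). The boundary weights of the
algorithm are `appC = 1 - boundaryFrac` and, on spheres of positive mass, `rejC = 1 - boundaryFrac`.
-/
def boundaryFrac (ν : Measure α) (c : α) : ℝ :=
  (1 - (ν (ball c (fillRadius ν c).toReal)).toReal) /
    (ν (sphere c (fillRadius ν c).toReal)).toReal

theorem boundaryFrac_nonneg : 0 ≤ boundaryFrac ν c :=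
  div_nonneg (sub_nonneg.2 toReal_measure_ball_fillRadius_le_one) ENNReal.toReal_nonneg

theorem boundaryFrac_le_one [OpensMeasurableSpace α] (hfin : ∀ r, ν (closedBall c r) ≠ ∞)
    (hR : fillRadius ν c ≠ ⊤) : boundaryFrac ν c ≤ 1 := by
  set t := (fillRadius ν c).toReal
  have hball : ν (ball c t) ≠ ∞ :=
    ne_top_of_le_ne_top (hfin t) (measure_mono ball_subset_closedBall)
  have hsphere : ν (sphere c t) ≠ ∞ :=
    ne_top_of_le_ne_top (hfin t) (measure_mono sphere_subset_closedBall)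
  have h := ENNReal.toReal_mono (hfin t) (one_le_measure_closedBall_fillRadius hfin hR)
  rw [measure_closedBall_eq_ball_add_sphere, ENNReal.toReal_add hball hsphere,
    ENNReal.toReal_one] at h
  exact div_le_one_of_le₀ (by linarith) ENNReal.toReal_nonneg

theorem boundaryFrac_anti [OpensMeasurableSpace α] (hfin' : ∀ r, ν' (closedBall c r) ≠ ∞)
    (h : ν ≤ ν') (hR : fillRadius ν c = fillRadius ν' c) (hR' : fillRadius ν' c ≠ ⊤) :
    boundaryFrac ν' c ≤ boundaryFrac ν c := by
  have hle := Measure.le_iff'.1 h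
  have hfin : ∀ r, ν (closedBall c r) ≠ ∞ := fun r => ne_top_of_le_ne_top (hfin' r) (hle _)
  unfold boundaryFrac
  rw [← hR]
  set t := (fillRadius ν c).toReal
  have hball' : ν' (ball c t) ≠ ∞ :=
    ne_top_of_le_ne_top (hfin' t) (measure_mono ball_subset_closedBall)
  have hsphere' : ν' (sphere c t) ≠ ∞ :=
    ne_top_of_le_ne_top (hfin' t) (measure_mono sphere_subset_closedBall)
  have hball'_le : (ν' (ball c t)).toReal ≤ 1 := by
    have := toReal_measure_ball_fillRadius_le_one (ν := ν') (c := c)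
    rwa [← hR] at this
  rcases eq_or_ne (ν (sphere c t)) 0 with hs | hs
  · have hb : ν (ball c t) = 1 := measure_ball_fillRadius_eq_one_of_sphere hfin (hR ▸ hR') hs
    have hb' : (ν' (ball c t)).toReal = 1 :=
      le_antisymm hball'_le (by simpa [hb] using ENNReal.toReal_mono hball' (hle (ball c t)))
    simp [hb, hb']
  · have hspos : 0 < (ν (sphere c t)).toReal :=
      ENNReal.toReal_pos hs (ne_top_of_le_ne_top hsphere' (hle _))
    exact div_le_div₀ (sub_nonneg.2 toReal_measure_ball_fillRadius_le_one)
      (by linarith [ENNReal.toReal_mono hball' (hle (ball c t))]) hspos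
      (ENNReal.toReal_mono hsphere' (hle _))

/-- `appFun - Rp` and `A - rejFun` are the weights `1 - Rp` and `A` times this profile. -/
def ballFill (c : α) (r : ℝ≥0∞) (θ : ℝ) (y : α) : ℝ≥0∞ :=
  if ENNReal.ofReal (dist y c) < r then 1
  else if ENNReal.ofReal (dist y c) = r then ENNReal.ofReal θ else 0

theorem measurable_ballFill [OpensMeasurableSpace α] (c : α) (r : ℝ≥0∞) (θ : ℝ) :
    Measurable (ballFill c r θ) := by
  have hd : Measurable fun y => ENNReal.ofReal (dist y c) :=
    (continuous_id.dist continuous_const).measurable.ennreal_ofReal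
  exact Measurable.ite (measurableSet_lt hd measurable_const) measurable_const
    (Measurable.ite (measurableSet_eq_fun hd measurable_const) measurable_const measurable_const)

theorem lintegral_ballFill [OpensMeasurableSpace α] {r : ℝ≥0∞} (hr : r ≠ ⊤) (θ : ℝ) :
    ∫⁻ y, ballFill c r θ y ∂ν =
      ν (ball c r.toReal) + ENNReal.ofReal θ * ν (sphere c r.toReal) := by
  have hfill : ballFill c r θ = (ball c r.toReal).indicator 1 +
      (sphere c r.toReal).indicator fun _ => ENNReal.ofReal θ := by
    ext y
    have hlt : ENNReal.ofReal (dist y c) < r ↔ y ∈ ball c r.toReal :=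
      ENNReal.ofReal_lt_iff_lt_toReal dist_nonneg hr
    have heq : ENNReal.ofReal (dist y c) = r ↔ y ∈ sphere c r.toReal := by
      conv_lhs => rw [← ENNReal.ofReal_toReal hr]
      exact ENNReal.ofReal_eq_ofReal_iff dist_nonneg ENNReal.toReal_nonneg
    by_cases hb : y ∈ ball c r.toReal
    · have hs : y ∉ sphere c r.toReal := fun hs => (mem_ball.1 hb).ne (mem_sphere.1 hs)
      simp [ballFill, hlt.2 hb, hb, hs]
    · simp [ballFill, hlt, heq, hb, indicator_apply, mem_sphere]
  simp only [hfill, Pi.add_apply]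
  rw [lintegral_add_left (measurable_one.indicator measurableSet_ball),
    lintegral_indicator_one measurableSet_ball,
    lintegral_indicator_const isClosed_sphere.measurableSet]

theorem lintegral_ballFill_fillRadius [OpensMeasurableSpace α]
    (hfin : ∀ r, ν (closedBall c r) ≠ ∞) (hR : fillRadius ν c ≠ ⊤) {θ : ℝ}
    (hθ : ν (sphere c (fillRadius ν c).toReal) ≠ 0 → θ = boundaryFrac ν c) :
    ∫⁻ y, ballFill c (fillRadius ν c) θ y ∂ν = 1 := by
  rw [lintegral_ballFill hR]
  rcases eq_or_ne (ν (sphere c (fillRadius ν c).toReal)) 0 with hs | hs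
  · rw [hs, mul_zero, add_zero, measure_ball_fillRadius_eq_one_of_sphere hfin hR hs]
  rw [hθ hs, boundaryFrac]
  set t := (fillRadius ν c).toReal
  set b := (ν (ball c t)).toReal
  set s := (ν (sphere c t)).toReal
  have hsphere : ν (sphere c t) ≠ ∞ :=
    ne_top_of_le_ne_top (hfin t) (measure_mono sphere_subset_closedBall)
  have hb : ν (ball c t) = ENNReal.ofReal b := (ENNReal.ofReal_toReal
    (ne_top_of_le_ne_top (hfin t) (measure_mono ball_subset_closedBall))).symm
  have hb1 : b ≤ 1 := toReal_measure_ball_fillRadius_le_one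
  have hspos : 0 < s := ENNReal.toReal_pos hs hsphere
  rw [hb, ← ENNReal.ofReal_toReal hsphere,
    ← ENNReal.ofReal_mul (div_nonneg (by linarith) hspos.le), div_mul_cancel₀ _ hspos.ne',
    ← ENNReal.ofReal_add ENNReal.toReal_nonneg (by linarith),
    add_sub_cancel, ENNReal.ofReal_one]

theorem lintegral_ballFill_fillRadius_le_one [OpensMeasurableSpace α]
    (hfin : ∀ r, ν (closedBall c r) ≠ ∞) {θ : ℝ}
    (hθ : fillRadius ν c ≠ ⊤ → ν (sphere c (fillRadius ν c).toReal) ≠ 0 →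
      θ = boundaryFrac ν c) :
    ∫⁻ y, ballFill c (fillRadius ν c) θ y ∂ν ≤ 1 := by
  rcases eq_or_ne (fillRadius ν c) ⊤ with hR | hR
  · have hfill : ∀ y, ballFill c (fillRadius ν c) θ y = 1 := fun _ =>
      if_pos (hR ▸ ENNReal.ofReal_lt_top)
    simpa [hfill] using measure_univ_le_one_of_fillRadius_eq_top hR
  · exact (lintegral_ballFill_fillRadius hfin hR (hθ hR)).le

end FillRadius

section Measurability

variable {α β : Type*} [MeasurableSpace α] [MeasurableSpace β] {μ : Measure β} [SFinite μ]

theorem measurable_setLIntegral_preimage {H : α × β → ℝ≥0∞} (hH : Measurable H)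
    {S : Set (α × β)} (hS : MeasurableSet S) :
    Measurable fun a => ∫⁻ b in Prod.mk a ⁻¹' S, H (a, b) ∂μ := by
  have h (a : α) :
      ∫⁻ b in Prod.mk a ⁻¹' S, H (a, b) ∂μ = ∫⁻ b, S.indicator H (a, b) ∂μ := by
    rw [← lintegral_indicator (measurable_prodMk_left hS)]
    rfl
  simp_rw [h]
  exact (hH.indicator hS).lintegral_prod_right'

end Measurability

section MetricMeasurability

variable {α : Type*} [PseudoMetricSpace α] [MeasurableSpace α]

theorem fillRadius_eq_iSup_rat (ν : Measure α) (c : α) :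
    fillRadius ν c = ⨆ (q : ℚ) (_ : ν (closedBall c q) ≤ 1), ENNReal.ofReal q := by
  refine le_antisymm (sSup_le ?_) (iSup₂_le fun q hq => ?_)
  · rintro _ ⟨a, ⟨-, ha⟩, rfl⟩
    refine le_of_forall_lt fun t ht => ?_
    obtain ⟨q, -, htq, hqa⟩ := ENNReal.lt_iff_exists_rat_btwn.1 ht
    have hqa' : (q : ℝ) ≤ a := (ENNReal.ofReal_lt_ofReal_iff'.1 hqa).1.le
    exact htq.trans_le
      (le_iSup₂_of_le q ((measure_mono (closedBall_subset_closedBall hqa')).trans ha) le_rfl)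
  · rcases le_or_gt 0 (q : ℝ) with hq0 | hq0
    · exact le_fillRadius hq0 hq
    · simp [ENNReal.ofReal_of_nonpos hq0.le]

variable [SecondCountableTopology α] [OpensMeasurableSpace α] {μ : Measure α} [SFinite μ]
  {H : α × α → ℝ≥0∞}

theorem measurable_fillRadius_withDensity (hH : Measurable H) :
    Measurable fun c => fillRadius (μ.withDensity fun y => H (c, y)) c := by
  simp_rw [fillRadius_eq_iSup_rat, withDensity_apply _ measurableSet_closedBall, iSup_eq_if]
  refine Measurable.iSup fun q => Measurable.ite ?_ measurable_const measurable_const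
  exact measurableSet_le (measurable_setLIntegral_preimage hH
    (measurableSet_le (continuous_snd.dist continuous_fst).measurable measurable_const))
    measurable_const

theorem measurable_setLIntegral_ball (hH : Measurable H) {g : α → ℝ} (hg : Measurable g) :
    Measurable fun c => ∫⁻ y in ball c (g c), H (c, y) ∂μ :=
  measurable_setLIntegral_preimage hH
    (measurableSet_lt (continuous_snd.dist continuous_fst).measurable (hg.comp measurable_fst))

theorem measurable_setLIntegral_sphere (hH : Measurable H) {g : α → ℝ} (hg : Measurable g) :
    Measurable fun c => ∫⁻ y in sphere c (g c), H (c, y) ∂μ :=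
  measurable_setLIntegral_preimage hH
    (measurableSet_eq_fun (continuous_snd.dist continuous_fst).measurable (hg.comp measurable_fst))

end MetricMeasurability

section Limits

variable {α : Type*} [MeasurableSpace α] {μ : Measure α} {F : ℕ → α → ℝ≥0∞}
  {f : α → ℝ≥0∞} {m : ℝ≥0∞}

theorem lintegral_le_of_tendsto (hF : ∀ n, Measurable (F n))
    (hlim : ∀ a, Tendsto (fun n => F n a) atTop (𝓝 (f a)))
    (hm : ∀ n, ∫⁻ a, F n a ∂μ ≤ m) : ∫⁻ a, f a ∂μ ≤ m :=
  calc ∫⁻ a, f a ∂μ = ∫⁻ a, liminf (fun n => F n a) atTop ∂μ :=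
        lintegral_congr fun a => (hlim a).liminf_eq.symm
    _ ≤ liminf (fun n => ∫⁻ a, F n a ∂μ) atTop := lintegral_liminf_le hF
    _ ≤ m := liminf_le_of_frequently_le' (Frequently.of_forall hm)

theorem le_lintegral_of_tendsto [IsFiniteMeasure μ] (hF : ∀ n, Measurable (F n))
    (hF1 : ∀ n a, F n a ≤ 1) (hlim : ∀ a, Tendsto (fun n => F n a) atTop (𝓝 (f a)))
    (hm : ∀ᶠ n in atTop, m ≤ ∫⁻ a, F n a ∂μ) : m ≤ ∫⁻ a, f a ∂μ :=
  ge_of_tendsto (tendsto_lintegral_of_dominated_convergence 1 hF (fun n => ae_of_all _ (hF1 n))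
    (by simp [measure_ne_top]) (ae_of_all _ hlim)) hm

end Limits

section Steps

def IsUnitKernel {α β : Type*} [MeasurableSpace α] [MeasurableSpace β] (f : α → β → ℝ) : Prop :=
  Measurable (uncurry f) ∧ ∀ x y, f x y ∈ Icc (0 : ℝ) 1

variable {d : ℕ} {φ ψ : Measure (Rd d)} {Rp Rp' A A' : Rd d → Rd d → ℝ} {x ξ : Rd d}

theorem _root_.LocFin.sigmaFinite (hψ : LocFin ψ) : SigmaFinite ψ :=
  ⟨⟨⟨fun n => closedBall 0 n, fun _ => trivial, fun _ => hψ _ isBounded_closedBall,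
    iUnion_closedBall_nat 0⟩⟩⟩

theorem _root_.LocFin.withDensity_closedBall_ne_top_s2 (hψ : LocFin ψ) {k : Rd d → ℝ≥0∞}
    (hk : ∀ y, k y ≤ 1) (c : Rd d) (r : ℝ) : ψ.withDensity k (closedBall c r) ≠ ∞ :=
  ne_top_of_le_ne_top (hψ _ isBounded_closedBall).ne
    (by simpa using Measure.le_iff'.1 (withDensity_mono (g := 1) (ae_of_all _ hk)) (closedBall c r))

def availableMeasure (ψ : Measure (Rd d)) (Rp : Rd d → Rd d → ℝ) (x : Rd d) : Measure (Rd d) :=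
  ψ.withDensity fun ξ => ENNReal.ofReal (1 - Rp x ξ)

def applicantMeasure (φ : Measure (Rd d)) (A : Rd d → Rd d → ℝ) (ξ : Rd d) : Measure (Rd d) :=
  φ.withDensity fun x => ENNReal.ofReal (A x ξ)

theorem availableMeasure_apply {s : Set (Rd d)} (hs : MeasurableSet s) :
    availableMeasure ψ Rp x s = ∫⁻ ξ in s, ENNReal.ofReal (1 - Rp x ξ) ∂ψ :=
  withDensity_apply _ hs

theorem applicantMeasure_apply {s : Set (Rd d)} (hs : MeasurableSet s) :
    applicantMeasure φ A ξ s = ∫⁻ x in s, ENNReal.ofReal (A x ξ) ∂φ :=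
  withDensity_apply _ hs

theorem availableMeasure_closedBall_ne_top (hψ : LocFin ψ) (h0 : ∀ ξ, 0 ≤ Rp x ξ) (r : ℝ) :
    availableMeasure ψ Rp x (closedBall x r) ≠ ∞ :=
  hψ.withDensity_closedBall_ne_top_s2 (fun ξ => ENNReal.ofReal_le_one.2 (by linarith [h0 ξ])) x r

theorem applicantMeasure_closedBall_ne_top (hφ : LocFin φ) (h1 : ∀ x, A x ξ ≤ 1) (r : ℝ) :
    applicantMeasure φ A ξ (closedBall ξ r) ≠ ∞ :=
  hφ.withDensity_closedBall_ne_top_s2 (fun x => ENNReal.ofReal_le_one.2 (h1 x)) ξ r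

theorem appRad_eq_fillRadius : appRad ψ Rp x = fillRadius (availableMeasure ψ Rp x) x := by
  simp only [fillRadius, availableMeasure_apply measurableSet_closedBall]
  rfl

theorem rejRad_eq_fillRadius : rejRad φ A ξ = fillRadius (applicantMeasure φ A ξ) ξ := by
  simp only [fillRadius, applicantMeasure_apply measurableSet_closedBall]
  rfl

theorem appC_eq (hR : appRad ψ Rp x ≠ ⊤) :
    appC ψ Rp x = 1 - boundaryFrac (availableMeasure ψ Rp x) x := by
  rw [appC, boundaryFrac, ← appRad_eq_fillRadius,
    ← availableMeasure_apply isClosed_sphere.measurableSet,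
    ← availableMeasure_apply measurableSet_ball]
  split_ifs with h
  · rfl
  · simp [nonpos_iff_eq_zero.1 (not_lt.1 fun hs => h ⟨hR, hs⟩)]

theorem appC_le_one : appC ψ Rp x ≤ 1 := by
  rcases eq_or_ne (appRad ψ Rp x) ⊤ with hR | hR
  · simp [appC, hR]
  · rw [appC_eq hR]
    exact sub_le_self _ boundaryFrac_nonneg

theorem appC_nonneg (hψ : LocFin ψ) (h0 : ∀ ξ, 0 ≤ Rp x ξ) : 0 ≤ appC ψ Rp x := by
  rcases eq_or_ne (appRad ψ Rp x) ⊤ with hR | hR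
  · simp [appC, hR]
  · rw [appC_eq hR, sub_nonneg]
    rw [appRad_eq_fillRadius] at hR
    exact boundaryFrac_le_one (availableMeasure_closedBall_ne_top hψ h0) hR

theorem rejC_eq (hR : rejRad φ A ξ ≠ ⊤)
    (hs : applicantMeasure φ A ξ (sphere ξ (rejRad φ A ξ).toReal) ≠ 0) :
    rejC φ A ξ = 1 - boundaryFrac (applicantMeasure φ A ξ) ξ := by
  rw [applicantMeasure_apply isClosed_sphere.measurableSet] at hs
  rw [rejC, if_pos ⟨hR, pos_iff_ne_zero.2 hs⟩, boundaryFrac, ← rejRad_eq_fillRadius,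
    ← applicantMeasure_apply isClosed_sphere.measurableSet,
    ← applicantMeasure_apply measurableSet_ball]

theorem rejC_eq_zero (hs : applicantMeasure φ A ξ (sphere ξ (rejRad φ A ξ).toReal) = 0) :
    rejC φ A ξ = 0 := by
  rw [applicantMeasure_apply isClosed_sphere.measurableSet] at hs
  simp [rejC, hs]

theorem rejC_le_one : rejC φ A ξ ≤ 1 := by
  by_cases h : rejRad φ A ξ ≠ ⊤ ∧ applicantMeasure φ A ξ (sphere ξ (rejRad φ A ξ).toReal) ≠ 0
  · rw [rejC_eq h.1 h.2]
    exact sub_le_self _ boundaryFrac_nonneg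
  · rw [rejC, if_neg]
    · exact zero_le_one
    · rwa [← applicantMeasure_apply isClosed_sphere.measurableSet, pos_iff_ne_zero]

theorem rejC_nonneg (hφ : LocFin φ) (h1 : ∀ x, A x ξ ≤ 1) : 0 ≤ rejC φ A ξ := by
  by_cases h : rejRad φ A ξ ≠ ⊤ ∧ applicantMeasure φ A ξ (sphere ξ (rejRad φ A ξ).toReal) ≠ 0
  · rw [rejC_eq h.1 h.2, sub_nonneg]
    have hR := h.1
    rw [rejRad_eq_fillRadius] at hR
    exact boundaryFrac_le_one (applicantMeasure_closedBall_ne_top hφ h1) hR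
  · rw [rejC, if_neg]
    rwa [← applicantMeasure_apply isClosed_sphere.measurableSet, pos_iff_ne_zero]

theorem appFun_of_lt (h : ENNReal.ofReal (dist x ξ) < appRad ψ Rp x) : appFun ψ Rp x ξ = 1 :=
  if_pos h

theorem appFun_of_eq (h : ENNReal.ofReal (dist x ξ) = appRad ψ Rp x) :
    appFun ψ Rp x ξ = appC ψ Rp x * Rp x ξ + (1 - appC ψ Rp x) := by
  rw [appFun, if_neg h.not_lt, if_pos h]

theorem appFun_of_gt (h : appRad ψ Rp x < ENNReal.ofReal (dist x ξ)) : appFun ψ Rp x ξ = 0 := by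
  rw [appFun, if_neg h.not_gt, if_neg h.ne']

theorem rejFun_of_lt (h : ENNReal.ofReal (dist x ξ) < rejRad φ A ξ) : rejFun φ A x ξ = 0 :=
  if_pos h

theorem rejFun_of_eq (h : ENNReal.ofReal (dist x ξ) = rejRad φ A ξ) :
    rejFun φ A x ξ = rejC φ A ξ * A x ξ := by
  rw [rejFun, if_neg h.not_lt, if_pos h]

theorem rejFun_of_gt (h : rejRad φ A ξ < ENNReal.ofReal (dist x ξ)) :
    rejFun φ A x ξ = A x ξ := by
  rw [rejFun, if_neg h.not_gt, if_neg h.ne']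

theorem appFun_mem_Icc (hψ : LocFin ψ) (hR : ∀ ξ, Rp x ξ ∈ Icc 0 1) (ξ : Rd d) :
    appFun ψ Rp x ξ ∈ Icc 0 1 := by
  have hc0 := appC_nonneg hψ fun ξ => (hR ξ).1
  have hc1 := appC_le_one (ψ := ψ) (Rp := Rp) (x := x)
  obtain ⟨h0, h1⟩ := hR ξ
  unfold appFun
  split_ifs <;> constructor <;> nlinarith

theorem rejFun_nonneg (hφ : LocFin φ) (hA : ∀ x, A x ξ ∈ Icc 0 1) (x : Rd d) :
    0 ≤ rejFun φ A x ξ := by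
  have hc0 := rejC_nonneg hφ fun x => (hA x).2
  unfold rejFun
  split_ifs
  exacts [le_rfl, mul_nonneg hc0 (hA x).1, (hA x).1]

theorem rejFun_le (h0 : 0 ≤ A x ξ) : rejFun φ A x ξ ≤ A x ξ := by
  have hc1 := rejC_le_one (φ := φ) (A := A) (ξ := ξ)
  unfold rejFun
  split_ifs
  exacts [h0, mul_le_of_le_one_left h0 hc1, le_rfl]

theorem ofReal_appFun_sub (h0 : 0 ≤ Rp x ξ) :
    ENNReal.ofReal (appFun ψ Rp x ξ - Rp x ξ) =
      ENNReal.ofReal (1 - Rp x ξ) * ballFill x (appRad ψ Rp x) (1 - appC ψ Rp x) ξ := by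
  have hc1 := appC_le_one (ψ := ψ) (Rp := Rp) (x := x)
  unfold appFun ballFill
  rw [dist_comm ξ x]
  split_ifs
  · rw [mul_one]
  · rw [← ENNReal.ofReal_mul' (by linarith)]
    ring_nf
  · rw [mul_zero]
    exact ENNReal.ofReal_of_nonpos (by linarith)

theorem ofReal_sub_rejFun (h0 : 0 ≤ A x ξ) :
    ENNReal.ofReal (A x ξ - rejFun φ A x ξ) =
      ENNReal.ofReal (A x ξ) * ballFill ξ (rejRad φ A ξ) (1 - rejC φ A ξ) x := by
  unfold rejFun ballFill
  split_ifs
  · rw [sub_zero, mul_one]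
  · rw [← ENNReal.ofReal_mul h0]
    ring_nf
  · rw [sub_self, mul_zero, ENNReal.ofReal_zero]

theorem lintegral_appFun_sub (hm : Measurable (Rp x)) (h0 : ∀ ξ, 0 ≤ Rp x ξ) :
    ∫⁻ ξ, ENNReal.ofReal (appFun ψ Rp x ξ - Rp x ξ) ∂ψ =
      ∫⁻ ξ, ballFill x (appRad ψ Rp x) (1 - appC ψ Rp x) ξ ∂availableMeasure ψ Rp x := by
  rw [availableMeasure, lintegral_withDensity_eq_lintegral_mul _
    (hm.const_sub 1).ennreal_ofReal (measurable_ballFill _ _ _)]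
  exact lintegral_congr fun ξ => ofReal_appFun_sub (h0 ξ)

theorem lintegral_sub_rejFun (hm : Measurable fun x => A x ξ) (h0 : ∀ x, 0 ≤ A x ξ) :
    ∫⁻ x, ENNReal.ofReal (A x ξ - rejFun φ A x ξ) ∂φ =
      ∫⁻ x, ballFill ξ (rejRad φ A ξ) (1 - rejC φ A ξ) x ∂applicantMeasure φ A ξ := by
  rw [applicantMeasure, lintegral_withDensity_eq_lintegral_mul _ hm.ennreal_ofReal
    (measurable_ballFill _ _ _)]
  exact lintegral_congr fun x => ofReal_sub_rejFun (h0 x)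

theorem lintegral_appFun_sub_eq_one (hψ : LocFin ψ) (hm : Measurable (Rp x))
    (h0 : ∀ ξ, 0 ≤ Rp x ξ) (hR : appRad ψ Rp x ≠ ⊤) :
    ∫⁻ ξ, ENNReal.ofReal (appFun ψ Rp x ξ - Rp x ξ) ∂ψ = 1 := by
  rw [lintegral_appFun_sub hm h0, appC_eq hR, sub_sub_cancel, appRad_eq_fillRadius]
  rw [appRad_eq_fillRadius] at hR
  exact lintegral_ballFill_fillRadius (availableMeasure_closedBall_ne_top hψ h0) hR fun _ => rfl

theorem lintegral_appFun_sub_le_one (hψ : LocFin ψ) (hm : Measurable (Rp x))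
    (h0 : ∀ ξ, 0 ≤ Rp x ξ) :
    ∫⁻ ξ, ENNReal.ofReal (appFun ψ Rp x ξ - Rp x ξ) ∂ψ ≤ 1 := by
  rw [lintegral_appFun_sub hm h0, appRad_eq_fillRadius]
  refine lintegral_ballFill_fillRadius_le_one (availableMeasure_closedBall_ne_top hψ h0)
    fun hR _ => ?_
  rw [appC_eq (appRad_eq_fillRadius ▸ hR), sub_sub_cancel]

theorem lintegral_sub_rejFun_eq_one (hφ : LocFin φ) (hm : Measurable fun x => A x ξ)
    (hA : ∀ x, A x ξ ∈ Icc 0 1) (hR : rejRad φ A ξ ≠ ⊤) :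
    ∫⁻ x, ENNReal.ofReal (A x ξ - rejFun φ A x ξ) ∂φ = 1 := by
  rw [lintegral_sub_rejFun hm fun x => (hA x).1, rejRad_eq_fillRadius]
  rw [rejRad_eq_fillRadius] at hR
  refine lintegral_ballFill_fillRadius (applicantMeasure_closedBall_ne_top hφ fun x => (hA x).2)
    hR fun hs => ?_
  rw [rejC_eq (rejRad_eq_fillRadius ▸ hR) (rejRad_eq_fillRadius ▸ hs), sub_sub_cancel]

theorem lintegral_sub_rejFun_le_one (hφ : LocFin φ) (hm : Measurable fun x => A x ξ)
    (hA : ∀ x, A x ξ ∈ Icc 0 1) :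
    ∫⁻ x, ENNReal.ofReal (A x ξ - rejFun φ A x ξ) ∂φ ≤ 1 := by
  rw [lintegral_sub_rejFun hm fun x => (hA x).1, rejRad_eq_fillRadius]
  refine lintegral_ballFill_fillRadius_le_one
    (applicantMeasure_closedBall_ne_top hφ fun x => (hA x).2) fun hR hs => ?_
  rw [rejC_eq (rejRad_eq_fillRadius ▸ hR) (rejRad_eq_fillRadius ▸ hs), sub_sub_cancel]

theorem availableMeasure_anti (hle : ∀ ξ, Rp x ξ ≤ Rp' x ξ) :
    availableMeasure ψ Rp' x ≤ availableMeasure ψ Rp x :=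
  withDensity_mono (ae_of_all _ fun ξ => ENNReal.ofReal_le_ofReal (by linarith [hle ξ]))

theorem applicantMeasure_mono (hle : ∀ x, A x ξ ≤ A' x ξ) :
    applicantMeasure φ A ξ ≤ applicantMeasure φ A' ξ :=
  withDensity_mono (ae_of_all _ fun x => ENNReal.ofReal_le_ofReal (hle x))

theorem appRad_mono (hle : ∀ ξ, Rp x ξ ≤ Rp' x ξ) : appRad ψ Rp x ≤ appRad ψ Rp' x := by
  simpa only [appRad_eq_fillRadius] using fillRadius_anti (availableMeasure_anti hle)

theorem rejRad_anti (hle : ∀ x, A x ξ ≤ A' x ξ) : rejRad φ A' ξ ≤ rejRad φ A ξ := by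
  simpa only [rejRad_eq_fillRadius] using fillRadius_anti (applicantMeasure_mono hle)

theorem appFun_mono (hψ : LocFin ψ) (hR : ∀ ξ, Rp x ξ ∈ Icc 0 1)
    (hR' : ∀ ξ, Rp' x ξ ∈ Icc 0 1) (hle : ∀ ξ, Rp x ξ ≤ Rp' x ξ) (ξ : Rd d) :
    appFun ψ Rp x ξ ≤ appFun ψ Rp' x ξ := by
  have hν := availableMeasure_anti (ψ := ψ) hle
  have hrad := appRad_mono (ψ := ψ) hle
  have hc0 := appC_nonneg hψ fun ξ => (hR ξ).1
  have hc0' := appC_nonneg hψ fun ξ => (hR' ξ).1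
  rcases lt_trichotomy (ENNReal.ofReal (dist x ξ)) (appRad ψ Rp x) with h | h | h
  · rw [appFun_of_lt h, appFun_of_lt (h.trans_le hrad)]
  · rw [appFun_of_eq h]
    rcases (h ▸ hrad).lt_or_eq with h' | h'
    · rw [appFun_of_lt h']
      nlinarith [(hR ξ).2]
    rw [appFun_of_eq h']
    have hne : appRad ψ Rp x ≠ ⊤ := h ▸ ENNReal.ofReal_ne_top
    have hradeq : appRad ψ Rp x = appRad ψ Rp' x := h.symm.trans h'
    have hc : appC ψ Rp' x ≤ appC ψ Rp x := by
      rw [appC_eq hne, appC_eq (hradeq ▸ hne)]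
      rw [appRad_eq_fillRadius, appRad_eq_fillRadius] at hradeq
      rw [appRad_eq_fillRadius] at hne
      linarith [boundaryFrac_anti (availableMeasure_closedBall_ne_top hψ fun ξ => (hR ξ).1) hν
        hradeq.symm (hradeq ▸ hne)]
    nlinarith [mul_le_mul hc (sub_le_sub_left (hle ξ) 1) (sub_nonneg.2 (hR' ξ).2) hc0]
  · rw [appFun_of_gt h]
    exact (appFun_mem_Icc hψ hR' ξ).1

theorem rejFun_mono (hφ : LocFin φ) (hA : ∀ x, A x ξ ∈ Icc 0 1)
    (hA' : ∀ x, A' x ξ ∈ Icc 0 1) (hle : ∀ x, A x ξ ≤ A' x ξ) (x : Rd d) :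
    rejFun φ A x ξ ≤ rejFun φ A' x ξ := by
  have hν := applicantMeasure_mono (φ := φ) hle
  have hrad := rejRad_anti (φ := φ) hle
  have hc0' := rejC_nonneg hφ fun x => (hA' x).2
  rcases lt_trichotomy (ENNReal.ofReal (dist x ξ)) (rejRad φ A' ξ) with h | h | h
  · rw [rejFun_of_lt h, rejFun_of_lt (h.trans_le hrad)]
  · rw [rejFun_of_eq h]
    rcases (h ▸ hrad).lt_or_eq with h' | h'
    · rw [rejFun_of_lt h']
      exact mul_nonneg hc0' (hA' x).1
    rw [rejFun_of_eq h']
    have hne : rejRad φ A' ξ ≠ ⊤ := h ▸ ENNReal.ofReal_ne_top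
    have hradeq : rejRad φ A' ξ = rejRad φ A ξ := h.symm.trans h'
    have hc : rejC φ A ξ ≤ rejC φ A' ξ := by
      rcases eq_or_ne (applicantMeasure φ A ξ (sphere ξ (rejRad φ A ξ).toReal)) 0 with hs | hs
      · rw [rejC_eq_zero hs]
        exact hc0'
      have hs' : applicantMeasure φ A' ξ (sphere ξ (rejRad φ A' ξ).toReal) ≠ 0 := by
        rw [hradeq]
        exact fun h0 => hs (le_antisymm (h0 ▸ Measure.le_iff'.1 hν _) zero_le)
      rw [rejC_eq (hradeq ▸ hne) hs, rejC_eq hne hs']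
      rw [rejRad_eq_fillRadius, rejRad_eq_fillRadius] at hradeq
      rw [rejRad_eq_fillRadius] at hne
      linarith [boundaryFrac_anti (applicantMeasure_closedBall_ne_top hφ fun x => (hA' x).2) hν
        hradeq.symm hne]
    exact mul_le_mul hc (hle x) (hA x).1 hc0'
  · rw [rejFun_of_gt h]
    exact (rejFun_le (hA x).1).trans (hle x)

theorem measurable_appRad [SFinite ψ] (hRp : Measurable (uncurry Rp)) :
    Measurable fun x => appRad ψ Rp x := by
  simp only [appRad_eq_fillRadius, availableMeasure]
  exact measurable_fillRadius_withDensity (H := fun p => ENNReal.ofReal (1 - Rp p.1 p.2))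
    (hRp.const_sub 1).ennreal_ofReal

theorem measurable_rejRad [SFinite φ] (hA : Measurable (uncurry A)) :
    Measurable fun ξ => rejRad φ A ξ := by
  simp only [rejRad_eq_fillRadius, applicantMeasure]
  exact measurable_fillRadius_withDensity (H := fun p => ENNReal.ofReal (A p.2 p.1))
    (hA.comp measurable_swap).ennreal_ofReal

theorem measurable_appC [SFinite ψ] (hRp : Measurable (uncurry Rp)) :
    Measurable fun x => appC ψ Rp x := by
  have hH : Measurable fun p : Rd d × Rd d => ENNReal.ofReal (1 - Rp p.1 p.2) :=
    (hRp.const_sub 1).ennreal_ofReal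
  have hrad := measurable_appRad (ψ := ψ) hRp
  have hS := measurable_setLIntegral_sphere (μ := ψ) hH hrad.ennreal_toReal
  have hB := measurable_setLIntegral_ball (μ := ψ) hH hrad.ennreal_toReal
  exact Measurable.ite ((hrad (measurableSet_singleton ⊤).compl).inter
    (measurableSet_lt measurable_const hS))
    (measurable_const.sub ((measurable_const.sub hB.ennreal_toReal).div hS.ennreal_toReal))
    measurable_const

theorem measurable_rejC [SFinite φ] (hA : Measurable (uncurry A)) :
    Measurable fun ξ => rejC φ A ξ := by
  have hH : Measurable fun p : Rd d × Rd d => ENNReal.ofReal (A p.2 p.1) :=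
    (hA.comp measurable_swap).ennreal_ofReal
  have hrad := measurable_rejRad (φ := φ) hA
  have hS := measurable_setLIntegral_sphere (μ := φ) hH hrad.ennreal_toReal
  have hB := measurable_setLIntegral_ball (μ := φ) hH hrad.ennreal_toReal
  exact Measurable.ite ((hrad (measurableSet_singleton ⊤).compl).inter
    (measurableSet_lt measurable_const hS))
    (measurable_const.sub ((measurable_const.sub hB.ennreal_toReal).div hS.ennreal_toReal))
    measurable_const

theorem IsUnitKernel.appFun (hψ : LocFin ψ) (hRp : IsUnitKernel Rp) :
    IsUnitKernel (appFun ψ Rp) := by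
  have := hψ.sigmaFinite
  refine ⟨?_, fun x ξ => appFun_mem_Icc hψ (hRp.2 x) ξ⟩
  have hd : Measurable fun p : Rd d × Rd d => ENNReal.ofReal (dist p.1 p.2) :=
    continuous_dist.measurable.ennreal_ofReal
  have hrad : Measurable fun p : Rd d × Rd d => appRad ψ Rp p.1 :=
    (measurable_appRad hRp.1).comp measurable_fst
  have hc : Measurable fun p : Rd d × Rd d => appC ψ Rp p.1 :=
    (measurable_appC hRp.1).comp measurable_fst
  exact Measurable.ite (measurableSet_lt hd hrad) measurable_const
    (Measurable.ite (measurableSet_eq_fun hd hrad) ((hc.mul hRp.1).add (measurable_const.sub hc))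
      measurable_const)

theorem IsUnitKernel.rejFun (hφ : LocFin φ) (hA : IsUnitKernel A) :
    IsUnitKernel (rejFun φ A) := by
  have := hφ.sigmaFinite
  refine ⟨?_, fun x ξ =>
    ⟨rejFun_nonneg hφ (hA.2 · ξ) x, (rejFun_le (hA.2 x ξ).1).trans (hA.2 x ξ).2⟩⟩
  have hd : Measurable fun p : Rd d × Rd d => ENNReal.ofReal (dist p.1 p.2) :=
    continuous_dist.measurable.ennreal_ofReal
  have hrad : Measurable fun p : Rd d × Rd d => rejRad φ A p.2 :=
    (measurable_rejRad hA.1).comp measurable_snd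
  have hc : Measurable fun p : Rd d × Rd d => rejC φ A p.2 :=
    (measurable_rejC hA.1).comp measurable_snd
  exact Measurable.ite (measurableSet_lt hd hrad) measurable_const
    (Measurable.ite (measurableSet_eq_fun hd hrad) (hc.mul hA.1) hA.1)

end Steps

section Iteration

variable {d : ℕ} {φ ψ : Measure (Rd d)}

theorem isUnitKernel_GS_R (hφ : LocFin φ) (hψ : LocFin ψ) : ∀ n, IsUnitKernel (GS_R φ ψ n)
  | 0 => ⟨measurable_const, fun _ _ => ⟨le_rfl, zero_le_one⟩⟩
  | n + 1 => ((isUnitKernel_GS_R hφ hψ n).appFun hψ).rejFun hφ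

theorem isUnitKernel_GS_A (hφ : LocFin φ) (hψ : LocFin ψ) (n : ℕ) :
    IsUnitKernel (GS_A φ ψ n) :=
  (isUnitKernel_GS_R hφ hψ n).appFun hψ

theorem GS_A_le_of_GS_R_le (hφ : LocFin φ) (hψ : LocFin ψ) {m n : ℕ} {x : Rd d}
    (h : ∀ ξ, GS_R φ ψ m x ξ ≤ GS_R φ ψ n x ξ) (ξ : Rd d) :
    GS_A φ ψ m x ξ ≤ GS_A φ ψ n x ξ :=
  appFun_mono hψ ((isUnitKernel_GS_R hφ hψ m).2 x) ((isUnitKernel_GS_R hφ hψ n).2 x) h ξ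

theorem GS_R_le_succ (hφ : LocFin φ) (hψ : LocFin ψ) :
    ∀ n x ξ, GS_R φ ψ n x ξ ≤ GS_R φ ψ (n + 1) x ξ
  | 0, x, ξ => ((isUnitKernel_GS_R hφ hψ 1).2 x ξ).1
  | n + 1, x, ξ => rejFun_mono hφ ((isUnitKernel_GS_A hφ hψ n).2 · ξ)
      ((isUnitKernel_GS_A hφ hψ (n + 1)).2 · ξ)
      (fun y => GS_A_le_of_GS_R_le hφ hψ (GS_R_le_succ hφ hψ n y) ξ) x

theorem monotone_GS_R (hφ : LocFin φ) (hψ : LocFin ψ) (x ξ : Rd d) :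
    Monotone fun n => GS_R φ ψ n x ξ :=
  monotone_nat_of_le_succ fun n => GS_R_le_succ hφ hψ n x ξ

theorem monotone_GS_A (hφ : LocFin φ) (hψ : LocFin ψ) (x ξ : Rd d) :
    Monotone fun n => GS_A φ ψ n x ξ :=
  monotone_nat_of_le_succ fun n => GS_A_le_of_GS_R_le hφ hψ (GS_R_le_succ hφ hψ n x) ξ

theorem bddAbove_range_GS_A (hφ : LocFin φ) (hψ : LocFin ψ) (x ξ : Rd d) :
    BddAbove (range fun n => GS_A φ ψ n x ξ) :=
  ⟨1, by rintro _ ⟨n, rfl⟩; exact ((isUnitKernel_GS_A hφ hψ n).2 x ξ).2⟩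

theorem bddAbove_range_GS_R (hφ : LocFin φ) (hψ : LocFin ψ) (x ξ : Rd d) :
    BddAbove (range fun n => GS_R φ ψ n x ξ) :=
  ⟨1, by rintro _ ⟨n, rfl⟩; exact ((isUnitKernel_GS_R hφ hψ n).2 x ξ).2⟩

theorem GS_A_le_GS_Alim (hφ : LocFin φ) (hψ : LocFin ψ) (n : ℕ) (x ξ : Rd d) :
    GS_A φ ψ n x ξ ≤ GS_Alim φ ψ x ξ :=
  le_ciSup (bddAbove_range_GS_A hφ hψ x ξ) n

theorem GS_R_le_GS_Rlim (hφ : LocFin φ) (hψ : LocFin ψ) (n : ℕ) (x ξ : Rd d) :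
    GS_R φ ψ n x ξ ≤ GS_Rlim φ ψ x ξ :=
  le_ciSup (bddAbove_range_GS_R hφ hψ x ξ) n

theorem tendsto_GS_A (hφ : LocFin φ) (hψ : LocFin ψ) (x ξ : Rd d) :
    Tendsto (fun n => GS_A φ ψ n x ξ) atTop (𝓝 (GS_Alim φ ψ x ξ)) :=
  tendsto_atTop_ciSup (monotone_GS_A hφ hψ x ξ) (bddAbove_range_GS_A hφ hψ x ξ)

theorem tendsto_GS_R (hφ : LocFin φ) (hψ : LocFin ψ) (x ξ : Rd d) :
    Tendsto (fun n => GS_R φ ψ n x ξ) atTop (𝓝 (GS_Rlim φ ψ x ξ)) :=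
  tendsto_atTop_ciSup (monotone_GS_R hφ hψ x ξ) (bddAbove_range_GS_R hφ hψ x ξ)

theorem GS_Alim_le_one (hφ : LocFin φ) (hψ : LocFin ψ) (x ξ : Rd d) :
    GS_Alim φ ψ x ξ ≤ 1 :=
  ciSup_le fun n => ((isUnitKernel_GS_A hφ hψ n).2 x ξ).2

theorem GS_Rlim_nonneg (hφ : LocFin φ) (hψ : LocFin ψ) (x ξ : Rd d) :
    0 ≤ GS_Rlim φ ψ x ξ :=
  ((isUnitKernel_GS_R hφ hψ 0).2 x ξ).1.trans (GS_R_le_GS_Rlim hφ hψ 0 x ξ)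

theorem GS_Rlim_le_GS_Alim (hφ : LocFin φ) (hψ : LocFin ψ) (x ξ : Rd d) :
    GS_Rlim φ ψ x ξ ≤ GS_Alim φ ψ x ξ :=
  ciSup_le fun n => (GS_R_le_succ hφ hψ n x ξ).trans
    ((rejFun_le ((isUnitKernel_GS_A hφ hψ n).2 x ξ).1).trans (GS_A_le_GS_Alim hφ hψ n x ξ))

theorem measurable_GS_Alim (hφ : LocFin φ) (hψ : LocFin ψ) :
    Measurable (uncurry (GS_Alim φ ψ)) :=
  Measurable.iSup fun n => (isUnitKernel_GS_A hφ hψ n).1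

theorem measurable_GS_Rlim (hφ : LocFin φ) (hψ : LocFin ψ) :
    Measurable (uncurry (GS_Rlim φ ψ)) :=
  Measurable.iSup fun n => (isUnitKernel_GS_R hφ hψ n).1

end Iteration

section SiteOptimal

variable {d : ℕ} {φ ψ : Measure (Rd d)}

theorem isConstrainedDensity_siteOptimal (hφ : LocFin φ) (hψ : LocFin ψ) :
    IsConstrainedDensity φ ψ (siteOptimal φ ψ) := by
  have hR := isUnitKernel_GS_R hφ hψ
  have hA := isUnitKernel_GS_A hφ hψ
  refine ⟨⟨(measurable_GS_Alim hφ hψ).sub (measurable_GS_Rlim hφ hψ),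
    fun x ξ => sub_nonneg.2 (GS_Rlim_le_GS_Alim hφ hψ x ξ), fun x => ?_, fun ξ => ?_⟩,
    fun x ξ => by
      rw [siteOptimal]; linarith [GS_Alim_le_one hφ hψ x ξ, GS_Rlim_nonneg hφ hψ x ξ]⟩
  · exact lintegral_le_of_tendsto
      (fun n => ((hA n).1.of_uncurry_left.sub (hR n).1.of_uncurry_left).ennreal_ofReal)
      (fun ξ => ENNReal.tendsto_ofReal
        ((tendsto_GS_A hφ hψ x ξ).sub (tendsto_GS_R hφ hψ x ξ)))
      fun n => lintegral_appFun_sub_le_one hψ (hR n).1.of_uncurry_left fun ξ => ((hR n).2 x ξ).1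
  · exact lintegral_le_of_tendsto
      (fun n => ((hA n).1.of_uncurry_right.sub (hR (n + 1)).1.of_uncurry_right).ennreal_ofReal)
      (fun x => ENNReal.tendsto_ofReal ((tendsto_GS_A hφ hψ x ξ).sub
        ((tendsto_GS_R hφ hψ x ξ).comp (tendsto_add_atTop_nat 1))))
      fun n => lintegral_sub_rejFun_le_one hφ (hA n).1.of_uncurry_right fun x => (hA n).2 x ξ

theorem one_le_lintegral_siteOptimal_of_GS_a_le (hφ : LocFin φ) (hψ : LocFin ψ) {x₀ : Rd d}
    {ρ : ℝ≥0∞} (hρ : ρ ≠ ⊤) (ha : ∀ n, GS_a φ ψ n x₀ ≤ ρ) :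
    1 ≤ ∫⁻ ξ, ENNReal.ofReal (siteOptimal φ ψ x₀ ξ) ∂ψ := by
  set B := closedBall x₀ ρ.toReal
  have : IsFiniteMeasure (ψ.restrict B) :=
    isFiniteMeasure_restrict.2 (hψ B isBounded_closedBall).ne
  have hR := isUnitKernel_GS_R hφ hψ
  have hmass :
      ∀ n, 1 ≤ ∫⁻ ξ in B, ENNReal.ofReal (GS_Alim φ ψ x₀ ξ - GS_R φ ψ n x₀ ξ) ∂ψ := by
    intro n
    have hsupp :
        (fun ξ => ENNReal.ofReal (GS_A φ ψ n x₀ ξ - GS_R φ ψ n x₀ ξ)).support ⊆ B := by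
      intro ξ hξ
      by_contra hξB
      have hfar : GS_a φ ψ n x₀ < ENNReal.ofReal (dist x₀ ξ) :=
        (ha n).trans_lt ((ENNReal.lt_ofReal_iff_toReal_lt hρ).2 (by
          rw [dist_comm]; exact not_le.1 hξB))
      refine hξ (ENNReal.ofReal_of_nonpos ?_)
      rw [GS_A, appFun_of_gt hfar]
      linarith [((hR n).2 x₀ ξ).1]
    calc 1 = ∫⁻ ξ, ENNReal.ofReal (GS_A φ ψ n x₀ ξ - GS_R φ ψ n x₀ ξ) ∂ψ :=
          (lintegral_appFun_sub_eq_one hψ (hR n).1.of_uncurry_left (fun ξ => ((hR n).2 x₀ ξ).1)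
            ((ha n).trans_lt hρ.lt_top).ne).symm
      _ = ∫⁻ ξ in B, ENNReal.ofReal (GS_A φ ψ n x₀ ξ - GS_R φ ψ n x₀ ξ) ∂ψ :=
          (setLIntegral_eq_of_support_subset hsupp).symm
      _ ≤ _ := lintegral_mono fun ξ => ENNReal.ofReal_le_ofReal
          (by linarith [GS_A_le_GS_Alim hφ hψ n x₀ ξ])
  calc 1 ≤ ∫⁻ ξ in B, ENNReal.ofReal (siteOptimal φ ψ x₀ ξ) ∂ψ :=
        le_lintegral_of_tendsto
          (F := fun n ξ => ENNReal.ofReal (GS_Alim φ ψ x₀ ξ - GS_R φ ψ n x₀ ξ))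
          (fun n => ((measurable_GS_Alim hφ hψ).of_uncurry_left.sub
            (hR n).1.of_uncurry_left).ennreal_ofReal)
          (fun n ξ => ENNReal.ofReal_le_one.2 (by
            linarith [GS_Alim_le_one hφ hψ x₀ ξ, ((hR n).2 x₀ ξ).1]))
          (fun ξ => ENNReal.tendsto_ofReal (tendsto_const_nhds.sub (tendsto_GS_R hφ hψ x₀ ξ)))
          (Eventually.of_forall hmass)
    _ ≤ _ := setLIntegral_le_lintegral _ _

theorem one_le_lintegral_siteOptimal_of_GS_r_le (hφ : LocFin φ) (hψ : LocFin ψ) {ξ₀ : Rd d}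
    {ρ : ℝ≥0∞} (hρ : ρ ≠ ⊤) {n₀ : ℕ} (hr : GS_r φ ψ n₀ ξ₀ ≤ ρ) :
    1 ≤ ∫⁻ x, ENNReal.ofReal (siteOptimal φ ψ x ξ₀) ∂φ := by
  set B := closedBall ξ₀ ρ.toReal
  have : IsFiniteMeasure (φ.restrict B) :=
    isFiniteMeasure_restrict.2 (hφ B isBounded_closedBall).ne
  have hR := isUnitKernel_GS_R hφ hψ
  have hA := isUnitKernel_GS_A hφ hψ
  have hmass : ∀ n ≥ n₀,
      1 ≤ ∫⁻ x in B, ENNReal.ofReal (GS_Alim φ ψ x ξ₀ - GS_R φ ψ (n + 1) x ξ₀) ∂φ := by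
    intro n hn
    have hrn : GS_r φ ψ n ξ₀ ≤ ρ :=
      (rejRad_anti fun x => monotone_GS_A hφ hψ x ξ₀ hn).trans hr
    have hsupp :
        (fun x => ENNReal.ofReal (GS_A φ ψ n x ξ₀ - GS_R φ ψ (n + 1) x ξ₀)).support ⊆ B := by
      intro x hx
      by_contra hxB
      have hfar : GS_r φ ψ n ξ₀ < ENNReal.ofReal (dist x ξ₀) :=
        hrn.trans_lt ((ENNReal.lt_ofReal_iff_toReal_lt hρ).2 (not_le.1 hxB))
      refine hx ?_
      show ENNReal.ofReal (GS_A φ ψ n x ξ₀ - rejFun φ (GS_A φ ψ n) x ξ₀) = 0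
      rw [rejFun_of_gt hfar, sub_self, ENNReal.ofReal_zero]
    calc 1 = ∫⁻ x, ENNReal.ofReal (GS_A φ ψ n x ξ₀ - GS_R φ ψ (n + 1) x ξ₀) ∂φ :=
          (lintegral_sub_rejFun_eq_one hφ (hA n).1.of_uncurry_right (fun x => (hA n).2 x ξ₀)
            (hrn.trans_lt hρ.lt_top).ne).symm
      _ = ∫⁻ x in B, ENNReal.ofReal (GS_A φ ψ n x ξ₀ - GS_R φ ψ (n + 1) x ξ₀) ∂φ :=
          (setLIntegral_eq_of_support_subset hsupp).symm
      _ ≤ _ := lintegral_mono fun x => ENNReal.ofReal_le_ofReal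
          (by linarith [GS_A_le_GS_Alim hφ hψ n x ξ₀])
  calc 1 ≤ ∫⁻ x in B, ENNReal.ofReal (siteOptimal φ ψ x ξ₀) ∂φ :=
        le_lintegral_of_tendsto
          (F := fun n x => ENNReal.ofReal (GS_Alim φ ψ x ξ₀ - GS_R φ ψ (n + 1) x ξ₀))
          (fun n => ((measurable_GS_Alim hφ hψ).of_uncurry_right.sub
            (hR (n + 1)).1.of_uncurry_right).ennreal_ofReal)
          (fun n x => ENNReal.ofReal_le_one.2 (by
            linarith [GS_Alim_le_one hφ hψ x ξ₀, ((hR (n + 1)).2 x ξ₀).1]))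
          (fun x => ENNReal.tendsto_ofReal (tendsto_const_nhds.sub
            ((tendsto_GS_R hφ hψ x ξ₀).comp (tendsto_add_atTop_nat 1))))
          ((eventually_ge_atTop n₀).mono hmass)
    _ ≤ _ := setLIntegral_le_lintegral _ _

theorem GS_Alim_eq_one_of_siteDesires (hφ : LocFin φ) (hψ : LocFin ψ) {x₀ ξ₀ : Rd d}
    (hd : SiteDesires ψ (siteOptimal φ ψ) x₀ ξ₀) : GS_Alim φ ψ x₀ ξ₀ = 1 := by
  obtain ⟨n, hn⟩ : ∃ n, ENNReal.ofReal (dist x₀ ξ₀) < GS_a φ ψ n x₀ := by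
    rcases hd.2 with hunex | ⟨ξ₁, hfar, hpos⟩
    · by_contra! h
      exact (one_le_lintegral_siteOptimal_of_GS_a_le hφ hψ ENNReal.ofReal_ne_top h).not_gt hunex
    · have hA : 0 < GS_Alim φ ψ x₀ ξ₁ := hpos.trans_le (by
        rw [siteOptimal]; linarith [GS_Rlim_nonneg hφ hψ x₀ ξ₁])
      obtain ⟨n, hn⟩ := exists_lt_of_lt_ciSup (f := fun n => GS_A φ ψ n x₀ ξ₁) hA
      refine ⟨n, ((ENNReal.ofReal_lt_ofReal_iff_of_nonneg dist_nonneg).2 hfar).trans_le ?_⟩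
      by_contra! hgt
      exact hn.ne' (appFun_of_gt hgt)
  exact le_antisymm (GS_Alim_le_one hφ hψ x₀ ξ₀)
    ((appFun_of_lt hn).symm.le.trans (GS_A_le_GS_Alim hφ hψ n x₀ ξ₀))

theorem GS_Rlim_eq_zero_of_centerDesires (hφ : LocFin φ) (hψ : LocFin ψ) {x₀ ξ₀ : Rd d}
    (hd : CenterDesires φ (siteOptimal φ ψ) x₀ ξ₀) : GS_Rlim φ ψ x₀ ξ₀ = 0 := by
  have hr : ∀ n, ENNReal.ofReal (dist x₀ ξ₀) < GS_r φ ψ n ξ₀ := by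
    intro n
    rcases hd.2 with hunsat | ⟨x₁, hfar, hpos⟩
    · by_contra! h
      exact (one_le_lintegral_siteOptimal_of_GS_r_le hφ hψ ENNReal.ofReal_ne_top h).not_gt hunsat
    · refine ((ENNReal.ofReal_lt_ofReal_iff_of_nonneg dist_nonneg).2 hfar).trans_le ?_
      by_contra! hgt
      -- from step `n` on, `ξ₀` rejects all that `x₁` applies to it
      have hRA : ∀ m ≥ n, GS_A φ ψ m x₁ ξ₀ = GS_R φ ψ (m + 1) x₁ ξ₀ := fun m hm =>
        (rejFun_of_gt ((rejRad_anti fun y => monotone_GS_A hφ hψ y ξ₀ hm).trans_lt hgt)).symm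
      have hlim : GS_Alim φ ψ x₁ ξ₀ = GS_Rlim φ ψ x₁ ξ₀ :=
        tendsto_nhds_unique
          ((tendsto_GS_A hφ hψ x₁ ξ₀).congr' ((eventually_ge_atTop n).mono hRA))
          ((tendsto_GS_R hφ hψ x₁ ξ₀).comp (tendsto_add_atTop_nat 1))
      exact hpos.ne' (sub_eq_zero.2 hlim)
  have hzero : ∀ n, GS_R φ ψ n x₀ ξ₀ = 0
    | 0 => rfl
    | n + 1 => rejFun_of_lt (hr n)
  simp [GS_Rlim, hzero]

end SiteOptimal

end GaleShapley

open GaleShapley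

/-- The site-optimal density is a stable constrained density. -/
theorem stmt2 {d : ℕ} (φ ψ : Measure (Rd d)) (hφ : LocFin φ) (hψ : LocFin ψ) :
    IsStableDensity φ ψ (siteOptimal φ ψ) := by
  refine ⟨isConstrainedDensity_siteOptimal hφ hψ, ?_⟩
  rintro ⟨x₀, ξ₀, hsite, hcenter⟩
  refine hsite.1.ne ?_
  rw [siteOptimal, GS_Alim_eq_one_of_siteDesires hφ hψ hsite,
    GS_Rlim_eq_zero_of_centerDesires hφ hψ hcenter, sub_zero]
end
end

section
/- Let Φ and Ψ be stationary random measures on a common probability space (Ω,𝓕,P) with ergodic P, with positive finite intensities satisfying λ_Φ = λ_Ψ. Let F be a flow-adapted jointly measurable map such that P-almost surely F(ω,·,·) is a stable constrained density for (Φ(ω), Ψ(ω)). Then P-almost surely F(ω,·,·) is balancing for (Φ(ω), Ψ(ω)): the set of F(ω)-unexhausted sites has Φ(ω)-measure zero and the set of F(ω)-unsated centers has Ψ(ω)-measure zero. -/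
open MeasureTheory Filter Metric Bornology
open scoped ENNReal NNReal Topology

noncomputable section

attribute [local instance] Classical.propDecidable

/-!
Call `U` the unexhausted sites and `V` the unsated centers. Stability forces `f x ξ = 1` for
`x ∈ U`, `ξ ∈ V`, so `Φ(U) ≤ ∫ f(·, ξ) dΦ ≤ 1` as soon as `V ≠ ∅`.
By the mass transport principle over the lattice translates of the unit cube `Q`, the expected
mass sent out of `Q` equals the expected mass received by `Q`; each is at most `λ |Q|`, with
equality iff `U ∩ Q` (resp. `V ∩ Q`) is a.s. null. If equality failed, `V` would be non-null
with positive probability, hence a.s. by ergodicity, so `E Φ(U) ≤ 1`; yet by stationarity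
`E Φ(U)` is the sum over infinitely many translates of `E Φ(U ∩ Q) > 0`.
-/

open ProbabilityTheory Function

namespace ProbabilityTheory.Kernel

variable {α β : Type*} [MeasurableSpace α] [MeasurableSpace β]

lemma isSFiniteKernel_of_forall_lt_top (κ : Kernel α β) (h : ∀ a, κ a Set.univ < ∞) :
    IsSFiniteKernel κ := by
  set n : α → ℕ := fun a => ⌈(κ a Set.univ).toReal⌉₊
  have hn : Measurable n :=
    Nat.measurable_ceil.comp (κ.measurable_coe MeasurableSet.univ).ennreal_toReal
  -- on the level set `{n = m}`, `κ` is bounded by `m`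
  set κs : ℕ → Kernel α β := fun m => piecewise (hn (measurableSet_singleton m)) κ 0
  have hκs : ∀ m, IsFiniteKernel (κs m) := fun m => by
    refine ⟨⟨m, ENNReal.natCast_lt_top m, fun a => ?_⟩⟩
    by_cases ha : n a = m
    · simp only [κs, piecewise_apply, Set.mem_preimage, Set.mem_singleton_iff, ha, if_true]
      rw [← ENNReal.ofReal_toReal (h a).ne, ← ha]
      exact ENNReal.ofReal_le_of_le_toReal (by simpa using Nat.le_ceil _)
    · simp [κs, piecewise_apply, ha]
  have hsum : κ = Kernel.sum κs := by
    ext a s hs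
    rw [sum_apply' _ _ hs,
      tsum_eq_single (n a) fun m hm => by simp [κs, piecewise_apply, Ne.symm hm]]
    simp [κs, piecewise_apply]
  rw [hsum]
  infer_instance

lemma isSFiniteKernel_of_iUnion_eq_univ (κ : Kernel α β) {s : ℕ → Set β}
    (hs : ∀ n, MeasurableSet (s n)) (hcover : ⋃ n, s n = Set.univ) (h : ∀ a n, κ a (s n) < ∞) :
    IsSFiniteKernel κ := by
  have hds : ∀ n, MeasurableSet (disjointed s n) := MeasurableSet.disjointed hs
  have hfin : ∀ n, IsSFiniteKernel (κ.restrict (hds n)) := fun n =>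
    isSFiniteKernel_of_forall_lt_top _ fun a => by
      rw [restrict_apply, Measure.restrict_apply_univ]
      exact (measure_mono (disjointed_subset s n)).trans_lt (h a n)
  have hsum : κ = Kernel.sum fun n => κ.restrict (hds n) := by
    ext a t ht
    simp only [sum_apply, restrict_apply]
    rw [← Measure.restrict_iUnion (disjoint_disjointed s) hds, iUnion_disjointed, hcover,
      Measure.restrict_univ]
  rw [hsum]
  infer_instance

end ProbabilityTheory.Kernel

lemma lintegral_eq_lintegral_iff_ae_eq {X : Type*} [MeasurableSpace X] {μ : Measure X}
    {f g : X → ℝ≥0∞} (hfg : f ≤ᵐ[μ] g) (hg : AEMeasurable g μ) (hg_fin : ∫⁻ x, g x ∂μ ≠ ∞) :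
    ∫⁻ x, f x ∂μ = ∫⁻ x, g x ∂μ ↔ f =ᵐ[μ] g :=
  ⟨fun h => ae_eq_of_ae_le_of_lintegral_le hfg (h ▸ hg_fin) hg h.ge, lintegral_congr_ae⟩

lemma setLIntegral_eq_measure_iff {X : Type*} [MeasurableSpace X] {μ : Measure X}
    {g : X → ℝ≥0∞} (hg : ∀ x, g x ≤ 1) {S : Set X} (hS : MeasurableSet S) (hμS : μ S ≠ ∞) :
    ∫⁻ x in S, g x ∂μ = μ S ↔ μ ({x | g x < 1} ∩ S) = 0 := by
  rw [← setLIntegral_one, lintegral_eq_lintegral_iff_ae_eq (ae_of_all _ hg) aemeasurable_const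
    (by rwa [setLIntegral_one]), EventuallyEq, ae_restrict_iff' hS, ae_iff]
  congr! 2
  ext x
  simp [(hg x).lt_iff_ne, and_comm]

section Tiling

variable {E : Type*} [AddGroup E] {L : AddSubgroup E} {Q : Set E}

lemma iUnion_preimage_add_eq_univ (hQ : ∀ x : E, ∃! v : L, x + v ∈ Q) :
    ⋃ v : L, (· + (v : E)) ⁻¹' Q = Set.univ :=
  Set.iUnion_eq_univ_iff.2 fun x => (hQ x).exists

lemma pairwise_disjoint_preimage_add (hQ : ∀ x : E, ∃! v : L, x + v ∈ Q) :
    Pairwise (Disjoint on fun v : L => (· + (v : E)) ⁻¹' Q) :=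
  fun _ _ hvw => Set.disjoint_left.2 fun x hv hw => hvw ((hQ x).unique hv hw)

end Tiling

lemma exists_tiling_of_pos {d : ℕ} (hd : 0 < d) :
    ∃ (L : AddSubgroup (Rd d)) (Q : Set (Rd d)), Countable L ∧ Infinite L ∧ MeasurableSet Q ∧
      IsBounded Q ∧ ∀ x : Rd d, ∃! v : L, x + v ∈ Q := by
  set b := (EuclideanSpace.basisFun (Fin d) ℝ).toBasis
  set L := (Submodule.span ℤ (Set.range b)).toAddSubgroup
  refine ⟨L, ZSpan.fundamentalDomain b,
    inferInstanceAs (Countable (Submodule.span ℤ (Set.range b))), ?_,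
    ZSpan.fundamentalDomain_measurableSet b, ZSpan.fundamentalDomain_isBounded b, fun x => ?_⟩
  · set i : Fin d := ⟨0, hd⟩
    refine Infinite.of_injective (fun n : ℤ => n • (⟨b i, Submodule.subset_span ⟨i, rfl⟩⟩ : L))
      fun m n h => ?_
    simpa [b] using congrArg (fun v : L => (v : Rd d) i) h
  · obtain ⟨v, hv, huniq⟩ := ZSpan.exist_unique_vadd_mem_fundamentalDomain b x
    simp only [Submodule.vadd_def, vadd_eq_add, add_comm] at hv huniq
    exact ⟨v, hv, huniq⟩

namespace IsRandomMeasure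

variable {Ω : Type*} [MeasurableSpace Ω] {d : ℕ} {Φ : Ω → Measure (Rd d)}

def toKernel (hΦ : IsRandomMeasure Φ) : Kernel Ω (Rd d) where
  toFun := Φ
  measurable' := Measure.measurable_of_measurable_coe _ hΦ.1

instance isSFiniteKernel_toKernel (hΦ : IsRandomMeasure Φ) : IsSFiniteKernel hΦ.toKernel :=
  Kernel.isSFiniteKernel_of_iUnion_eq_univ _ (fun _ => measurableSet_closedBall)
    (iUnion_closedBall_nat 0) fun ω _ => hΦ.2 ω _ isBounded_closedBall

lemma sFinite (hΦ : IsRandomMeasure Φ) (ω : Ω) : SFinite (Φ ω) :=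
  inferInstanceAs (SFinite (hΦ.toKernel ω))

lemma measurable_setLIntegral (hΦ : IsRandomMeasure Φ) {α : Type*} [MeasurableSpace α]
    {g : α → Ω} (hg : Measurable g) {f : α → Rd d → ℝ≥0∞} (hf : Measurable (uncurry f))
    {B : Set (Rd d)} (hB : MeasurableSet B) :
    Measurable fun a => ∫⁻ x in B, f a x ∂Φ (g a) :=
  hf.setLIntegral_kernel_prod_right (κ := hΦ.toKernel.comap g hg) hB

lemma measurable_measure_prodMk (hΦ : IsRandomMeasure Φ) {t : Set (Ω × Rd d)}
    (ht : MeasurableSet t) : Measurable fun ω => Φ ω (Prod.mk ω ⁻¹' t) :=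
  Kernel.measurable_kernel_prodMk_left (κ := hΦ.toKernel) ht

end IsRandomMeasure

section Flow

variable {Ω : Type*} [MeasurableSpace Ω] {d : ℕ} {θ : Rd d → Ω → Ω} {P : Measure Ω}

lemma IsMeasurableFlow.measurable (hflow : IsMeasurableFlow θ) (s : Rd d) : Measurable (θ s) :=
  hflow.1.comp (measurable_const.prodMk measurable_id)

lemma IsFlowInvariant.lintegral_comp (hinv : IsFlowInvariant θ P) (hflow : IsMeasurableFlow θ)
    {h : Ω → ℝ≥0∞} (hh : Measurable h) (s : Rd d) : ∫⁻ ω, h (θ s ω) ∂P = ∫⁻ ω, h ω ∂P := by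
  conv_rhs => rw [← hinv s]
  exact (lintegral_map hh (hflow.measurable s)).symm

lemma IsErgodicFlow.ae_mem_of_measure_ne_zero [IsProbabilityMeasure P] (herg : IsErgodicFlow θ P)
    {A : Set Ω} (hA : MeasurableSet A) (hθA : ∀ s, θ s ⁻¹' A = A) (h : P A ≠ 0) :
    ∀ᵐ ω ∂P, ω ∈ A :=
  (ae_iff_measure_eq hA.nullMeasurableSet).2 <| by
    rw [measure_univ]
    exact (herg A hA hθA).resolve_left h

lemma FlowAdaptedMeasure.apply_eq_map {Φ : Ω → Measure (Rd d)} (hΦa : FlowAdaptedMeasure θ Φ)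
    (ω : Ω) (s : Rd d) : Φ (θ s ω) = (Φ ω).map (· - s) := by
  ext B hB
  rw [Measure.map_apply (measurable_sub_const s) hB, hΦa ω s B hB, Set.image_add_right]
  simp only [sub_eq_add_neg]

lemma FlowAdaptedKernel.swap {F : Ω → Rd d → Rd d → ℝ} (hF : FlowAdaptedKernel θ F) :
    FlowAdaptedKernel θ fun ω => swap (F ω) :=
  ⟨hF.1.comp (measurable_fst.prodMk (measurable_snd.snd.prodMk measurable_snd.fst)),
    fun ω s x ξ => hF.2 ω s ξ x⟩

end Flow

section Transport

variable {Ω : Type*} {d : ℕ}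

def sentMass (Ψ : Ω → Measure (Rd d)) (F : Ω → Rd d → Rd d → ℝ) (C : Set (Rd d)) (ω : Ω)
    (x : Rd d) : ℝ≥0∞ :=
  ∫⁻ ξ in C, ENNReal.ofReal (F ω x ξ) ∂Ψ ω

lemma sentMass_univ (Ψ : Ω → Measure (Rd d)) (F : Ω → Rd d → Rd d → ℝ) (ω : Ω) (x : Rd d) :
    sentMass Ψ F Set.univ ω x = ∫⁻ ξ, ENNReal.ofReal (F ω x ξ) ∂Ψ ω := by
  rw [sentMass, Measure.restrict_univ]

variable [MeasurableSpace Ω] {θ : Rd d → Ω → Ω} {P : Measure Ω} {Φ Ψ : Ω → Measure (Rd d)}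
  {F : Ω → Rd d → Rd d → ℝ}

def meanTransport (P : Measure Ω) (Φ Ψ : Ω → Measure (Rd d)) (F : Ω → Rd d → Rd d → ℝ)
    (B C : Set (Rd d)) : ℝ≥0∞ :=
  ∫⁻ ω, ∫⁻ x in B, sentMass Ψ F C ω x ∂Φ ω ∂P

lemma measurable_sentMass (hΨ : IsRandomMeasure Ψ)
    (hFm : Measurable fun p : Ω × Rd d × Rd d => F p.1 p.2.1 p.2.2) {C : Set (Rd d)}
    (hC : MeasurableSet C) : Measurable (uncurry (sentMass Ψ F C)) :=
  hΨ.measurable_setLIntegral measurable_fst (f := fun p ξ => ENNReal.ofReal (F p.1 p.2 ξ))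
    (ENNReal.measurable_ofReal.comp (hFm.comp MeasurableEquiv.prodAssoc.measurable)) hC

lemma measurable_lintegral_sentMass (hΦ : IsRandomMeasure Φ) (hΨ : IsRandomMeasure Ψ)
    (hFm : Measurable fun p : Ω × Rd d × Rd d => F p.1 p.2.1 p.2.2) {B C : Set (Rd d)}
    (hB : MeasurableSet B) (hC : MeasurableSet C) :
    Measurable fun ω => ∫⁻ x in B, sentMass Ψ F C ω x ∂Φ ω :=
  hΦ.measurable_setLIntegral measurable_id (measurable_sentMass hΨ hFm hC) hB

lemma FlowAdaptedMeasure.setLIntegral_comp_flow (hΦa : FlowAdaptedMeasure θ Φ)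
    {g : Rd d → ℝ≥0∞} (hg : Measurable g) {B : Set (Rd d)} (hB : MeasurableSet B) (ω : Ω)
    (s : Rd d) : ∫⁻ x in (· + s) ⁻¹' B, g x ∂Φ (θ s ω) = ∫⁻ x in B, g (x - s) ∂Φ ω := by
  rw [hΦa.apply_eq_map, setLIntegral_map (measurable_add_const s hB) hg (measurable_sub_const s)]
  congr 2
  ext x
  simp

lemma sentMass_comp_flow (hΨa : FlowAdaptedMeasure θ Ψ) (hF : FlowAdaptedKernel θ F)
    {C : Set (Rd d)} (hC : MeasurableSet C) (s : Rd d) (ω : Ω) (x : Rd d) :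
    sentMass Ψ F ((· + s) ⁻¹' C) (θ s ω) x = sentMass Ψ F C ω (x + s) := by
  have hg : Measurable fun ξ => ENNReal.ofReal (F (θ s ω) x ξ) :=
    ENNReal.measurable_ofReal.comp
      (hF.1.comp (measurable_const.prodMk (measurable_const.prodMk measurable_id)))
  simp only [sentMass]
  rw [hΨa.setLIntegral_comp_flow hg hC]
  simp only [hF.2, sub_add_cancel]

lemma meanTransport_preimage_add (hflow : IsMeasurableFlow θ) (hinv : IsFlowInvariant θ P)
    (hΦ : IsRandomMeasure Φ) (hΨ : IsRandomMeasure Ψ) (hΦa : FlowAdaptedMeasure θ Φ)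
    (hΨa : FlowAdaptedMeasure θ Ψ) (hF : FlowAdaptedKernel θ F) {B C : Set (Rd d)}
    (hB : MeasurableSet B) (hC : MeasurableSet C) (s : Rd d) :
    meanTransport P Φ Ψ F ((· + s) ⁻¹' B) ((· + s) ⁻¹' C) = meanTransport P Φ Ψ F B C := by
  rw [meanTransport, ← hinv.lintegral_comp hflow
    (measurable_lintegral_sentMass hΦ hΨ hF.1 (measurable_add_const s hB)
      (measurable_add_const s hC)) s]
  refine lintegral_congr fun ω => ?_
  rw [hΦa.setLIntegral_comp_flow (g := fun x => sentMass Ψ F ((· + s) ⁻¹' C) (θ s ω) x)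
    ((measurable_sentMass hΨ hF.1 (measurable_add_const s hC)).comp measurable_prodMk_left) hB]
  simp only [sentMass_comp_flow hΨa hF hC, sub_add_cancel]

lemma meanTransport_iUnion_left (hΦ : IsRandomMeasure Φ) (hΨ : IsRandomMeasure Ψ)
    (hFm : Measurable fun p : Ω × Rd d × Rd d => F p.1 p.2.1 p.2.2) {ι : Type*} [Countable ι]
    {B : ι → Set (Rd d)} (hB : ∀ i, MeasurableSet (B i)) (hdisj : Pairwise (Disjoint on B))
    {C : Set (Rd d)} (hC : MeasurableSet C) :
    meanTransport P Φ Ψ F (⋃ i, B i) C = ∑' i, meanTransport P Φ Ψ F (B i) C := by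
  simp only [meanTransport, lintegral_iUnion hB hdisj]
  exact lintegral_tsum fun i => (measurable_lintegral_sentMass hΦ hΨ hFm (hB i) hC).aemeasurable

lemma meanTransport_iUnion_right (hΦ : IsRandomMeasure Φ) (hΨ : IsRandomMeasure Ψ)
    (hFm : Measurable fun p : Ω × Rd d × Rd d => F p.1 p.2.1 p.2.2) {B : Set (Rd d)}
    (hB : MeasurableSet B) {ι : Type*} [Countable ι] {C : ι → Set (Rd d)}
    (hC : ∀ i, MeasurableSet (C i)) (hdisj : Pairwise (Disjoint on C)) :
    meanTransport P Φ Ψ F B (⋃ i, C i) = ∑' i, meanTransport P Φ Ψ F B (C i) := by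
  have hsent : ∀ ω x, sentMass Ψ F (⋃ i, C i) ω x = ∑' i, sentMass Ψ F (C i) ω x :=
    fun ω x => lintegral_iUnion hC hdisj _
  simp only [meanTransport, hsent]
  rw [← lintegral_tsum fun i => (measurable_lintegral_sentMass hΦ hΨ hFm hB (hC i)).aemeasurable]
  refine lintegral_congr fun ω => lintegral_tsum fun i => ?_
  exact ((measurable_sentMass hΨ hFm (hC i)).comp measurable_prodMk_left).aemeasurable

lemma meanTransport_swap (hΦ : IsRandomMeasure Φ) (hΨ : IsRandomMeasure Ψ)
    (hFm : Measurable fun p : Ω × Rd d × Rd d => F p.1 p.2.1 p.2.2) (B C : Set (Rd d)) :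
    meanTransport P Φ Ψ F B C = meanTransport P Ψ Φ (fun ω => swap (F ω)) C B := by
  refine lintegral_congr fun ω => ?_
  have := hΦ.sFinite ω
  have := hΨ.sFinite ω
  exact lintegral_lintegral_swap (ENNReal.measurable_ofReal.comp
    (hFm.comp (measurable_const.prodMk measurable_id))).aemeasurable

end Transport


section MassTransport

variable {Ω : Type*} [MeasurableSpace Ω] {d : ℕ} {θ : Rd d → Ω → Ω} {P : Measure Ω}
  {Φ Ψ : Ω → Measure (Rd d)} {F : Ω → Rd d → Rd d → ℝ}
  {L : AddSubgroup (Rd d)} [Countable L] {Q : Set (Rd d)}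

theorem meanTransport_univ_eq_of_tiling (hflow : IsMeasurableFlow θ)
    (hinv : IsFlowInvariant θ P) (hΦ : IsRandomMeasure Φ) (hΨ : IsRandomMeasure Ψ)
    (hΦa : FlowAdaptedMeasure θ Φ) (hΨa : FlowAdaptedMeasure θ Ψ) (hF : FlowAdaptedKernel θ F)
    (hQm : MeasurableSet Q) (hQ : ∀ x : Rd d, ∃! v : L, x + v ∈ Q) :
    meanTransport P Φ Ψ F Q Set.univ = meanTransport P Φ Ψ F Set.univ Q := by
  have hT : ∀ v : Rd d, MeasurableSet ((· + v) ⁻¹' Q) := fun v => measurable_add_const v hQm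
  have hshift : ∀ v : L, meanTransport P Φ Ψ F Q ((· + (v : Rd d)) ⁻¹' Q) =
      meanTransport P Φ Ψ F ((· + ((-v : L) : Rd d)) ⁻¹' Q) Q := fun v => by
    rw [← meanTransport_preimage_add hflow hinv hΦ hΨ hΦa hΨa hF (hT _) hQm v]
    congr
    ext x
    simp
  calc meanTransport P Φ Ψ F Q Set.univ
      = ∑' v : L, meanTransport P Φ Ψ F Q ((· + (v : Rd d)) ⁻¹' Q) := by
        rw [← meanTransport_iUnion_right hΦ hΨ hF.1 hQm (fun v : L => hT v)
          (pairwise_disjoint_preimage_add hQ), iUnion_preimage_add_eq_univ hQ]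
    _ = ∑' v : L, meanTransport P Φ Ψ F ((· + ((-v : L) : Rd d)) ⁻¹' Q) Q := tsum_congr hshift
    _ = ∑' v : L, meanTransport P Φ Ψ F ((· + (v : Rd d)) ⁻¹' Q) Q :=
        (Equiv.neg L).tsum_eq fun v => meanTransport P Φ Ψ F ((· + (v : Rd d)) ⁻¹' Q) Q
    _ = meanTransport P Φ Ψ F Set.univ Q := by
        rw [← meanTransport_iUnion_left hΦ hΨ hF.1 (fun v : L => hT v)
          (pairwise_disjoint_preimage_add hQ) hQm, iUnion_preimage_add_eq_univ hQ]

theorem meanTransport_univ_eq_swap_of_tiling (hflow : IsMeasurableFlow θ)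
    (hinv : IsFlowInvariant θ P) (hΦ : IsRandomMeasure Φ) (hΨ : IsRandomMeasure Ψ)
    (hΦa : FlowAdaptedMeasure θ Φ) (hΨa : FlowAdaptedMeasure θ Ψ) (hF : FlowAdaptedKernel θ F)
    (hQm : MeasurableSet Q) (hQ : ∀ x : Rd d, ∃! v : L, x + v ∈ Q) :
    meanTransport P Φ Ψ F Q Set.univ =
      meanTransport P Ψ Φ (fun ω => swap (F ω)) Q Set.univ :=
  (meanTransport_univ_eq_of_tiling hflow hinv hΦ hΨ hΦa hΨa hF hQm hQ).trans
    (meanTransport_swap hΦ hΨ hF.1 _ _)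

end MassTransport


section Unexhausted

variable {Ω : Type*} [MeasurableSpace Ω] {d : ℕ} {θ : Rd d → Ω → Ω} {P : Measure Ω}
  {Φ Ψ : Ω → Measure (Rd d)} {F : Ω → Rd d → Rd d → ℝ}

lemma measurableSet_unexhausted (hΨ : IsRandomMeasure Ψ)
    (hFm : Measurable fun p : Ω × Rd d × Rd d => F p.1 p.2.1 p.2.2) :
    MeasurableSet {p : Ω × Rd d | Unexhausted (Ψ p.1) (F p.1) p.2} := by
  have h : Measurable fun p : Ω × Rd d => sentMass Ψ F Set.univ p.1 p.2 :=
    measurable_sentMass hΨ hFm MeasurableSet.univ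
  simp only [sentMass_univ] at h
  exact measurableSet_lt h measurable_const

lemma measurableSet_setOf_unexhausted (hΨ : IsRandomMeasure Ψ)
    (hFm : Measurable fun p : Ω × Rd d × Rd d => F p.1 p.2.1 p.2.2) (ω : Ω) :
    MeasurableSet {x | Unexhausted (Ψ ω) (F ω) x} :=
  measurable_prodMk_left (measurableSet_unexhausted hΨ hFm)

lemma measurable_measure_unexhausted_inter (hΦ : IsRandomMeasure Φ) (hΨ : IsRandomMeasure Ψ)
    (hFm : Measurable fun p : Ω × Rd d × Rd d => F p.1 p.2.1 p.2.2) {B : Set (Rd d)}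
    (hB : MeasurableSet B) :
    Measurable fun ω => Φ ω ({x | Unexhausted (Ψ ω) (F ω) x} ∩ B) :=
  hΦ.measurable_measure_prodMk ((measurableSet_unexhausted hΨ hFm).inter (measurable_snd hB))

lemma setOf_unexhausted_comp_flow (hΨa : FlowAdaptedMeasure θ Ψ) (hF : FlowAdaptedKernel θ F)
    (ω : Ω) (s : Rd d) :
    {x | Unexhausted (Ψ (θ s ω)) (F (θ s ω)) x} =
      (· + s) ⁻¹' {x | Unexhausted (Ψ ω) (F ω) x} := by
  ext x
  have h := sentMass_comp_flow hΨa hF MeasurableSet.univ s ω x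
  rw [Set.preimage_univ, sentMass_univ, sentMass_univ] at h
  simp only [Set.mem_ofPred_eq, Set.mem_preimage, Unexhausted, h]

lemma measure_unexhausted_comp_flow (hΨ : IsRandomMeasure Ψ) (hΦa : FlowAdaptedMeasure θ Φ)
    (hΨa : FlowAdaptedMeasure θ Ψ) (hF : FlowAdaptedKernel θ F) {B : Set (Rd d)}
    (hB : MeasurableSet B) (ω : Ω) (s : Rd d) :
    Φ (θ s ω) ({x | Unexhausted (Ψ (θ s ω)) (F (θ s ω)) x} ∩ B) =
      Φ ω ({x | Unexhausted (Ψ ω) (F ω) x} ∩ (· - s) ⁻¹' B) := by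
  have hU := measurableSet_setOf_unexhausted hΨ hF.1 ω
  rw [setOf_unexhausted_comp_flow hΨa hF, hΦa.apply_eq_map,
    Measure.map_apply (measurable_sub_const s) ((measurable_add_const s hU).inter hB)]
  congr 1
  ext x
  simp

lemma lintegral_measure_unexhausted_preimage_sub (hflow : IsMeasurableFlow θ)
    (hinv : IsFlowInvariant θ P) (hΦ : IsRandomMeasure Φ) (hΨ : IsRandomMeasure Ψ)
    (hΦa : FlowAdaptedMeasure θ Φ) (hΨa : FlowAdaptedMeasure θ Ψ) (hF : FlowAdaptedKernel θ F)
    {B : Set (Rd d)} (hB : MeasurableSet B) (s : Rd d) :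
    ∫⁻ ω, Φ ω ({x | Unexhausted (Ψ ω) (F ω) x} ∩ (· - s) ⁻¹' B) ∂P =
      ∫⁻ ω, Φ ω ({x | Unexhausted (Ψ ω) (F ω) x} ∩ B) ∂P := by
  rw [← hinv.lintegral_comp hflow (measurable_measure_unexhausted_inter hΦ hΨ hF.1 hB) s]
  simp only [measure_unexhausted_comp_flow hΨ hΦa hΨa hF hB]

lemma lintegral_measure_unexhausted_eq_tsum (hflow : IsMeasurableFlow θ)
    (hinv : IsFlowInvariant θ P) (hΦ : IsRandomMeasure Φ) (hΨ : IsRandomMeasure Ψ)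
    (hΦa : FlowAdaptedMeasure θ Φ) (hΨa : FlowAdaptedMeasure θ Ψ) (hF : FlowAdaptedKernel θ F)
    {L : AddSubgroup (Rd d)} [Countable L] {Q : Set (Rd d)} (hQm : MeasurableSet Q)
    (hQ : ∀ x : Rd d, ∃! v : L, x + v ∈ Q) :
    ∫⁻ ω, Φ ω {x | Unexhausted (Ψ ω) (F ω) x} ∂P =
      ∑' _v : L, ∫⁻ ω, Φ ω ({x | Unexhausted (Ψ ω) (F ω) x} ∩ Q) ∂P := by
  have hT : ∀ v : L, MeasurableSet ((· + (v : Rd d)) ⁻¹' Q) := fun v =>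
    measurable_add_const _ hQm
  have hsplit : ∀ ω, Φ ω {x | Unexhausted (Ψ ω) (F ω) x} =
      ∑' v : L, Φ ω ({x | Unexhausted (Ψ ω) (F ω) x} ∩ (· + (v : Rd d)) ⁻¹' Q) := fun ω => by
    rw [← measure_iUnion ((pairwise_disjoint_preimage_add hQ).mono fun _ _ h =>
        h.mono Set.inter_subset_right Set.inter_subset_right)
      fun v => (measurableSet_setOf_unexhausted hΨ hF.1 ω).inter (hT v),
      ← Set.inter_iUnion, iUnion_preimage_add_eq_univ hQ, Set.inter_univ]
  rw [lintegral_congr hsplit, lintegral_tsum fun v =>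
    (measurable_measure_unexhausted_inter hΦ hΨ hF.1 (hT v)).aemeasurable]
  refine tsum_congr fun v => ?_
  rw [← lintegral_measure_unexhausted_preimage_sub hflow hinv hΦ hΨ hΦa hΨa hF hQm (-v)]
  simp only [sub_neg_eq_add]

lemma meanTransport_univ_eq_iff (hΦ : IsRandomMeasure Φ) {lam : ℝ≥0∞}
    (hΦi : HasIntensity P Φ lam) (hlam : lam ≠ ∞)
    (hsub : ∀ᵐ ω ∂P, ∀ x, ∫⁻ ξ, ENNReal.ofReal (F ω x ξ) ∂Ψ ω ≤ 1) {B : Set (Rd d)}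
    (hB : MeasurableSet B) (hBb : IsBounded B) :
    meanTransport P Φ Ψ F B Set.univ = lam * volume B ↔
      ∀ᵐ ω ∂P, Φ ω ({x | Unexhausted (Ψ ω) (F ω) x} ∩ B) = 0 := by
  have hle : ∀ᵐ ω ∂P, ∫⁻ x in B, sentMass Ψ F Set.univ ω x ∂Φ ω ≤ Φ ω B :=
    hsub.mono fun ω h => (setLIntegral_mono' hB fun x _ => (sentMass_univ Ψ F ω x).trans_le
      (h x)).trans_eq (setLIntegral_one B)
  rw [meanTransport, ← hΦi B hB, lintegral_eq_lintegral_iff_ae_eq hle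
    (hΦ.1 B hB).aemeasurable
    (by rw [hΦi B hB]; exact ENNReal.mul_ne_top hlam hBb.measure_lt_top.ne)]
  refine ⟨fun h => ?_, fun h => ?_⟩
  · filter_upwards [h, hsub] with ω hω hω1
    simp only [sentMass_univ] at hω
    exact (setLIntegral_eq_measure_iff hω1 hB (hΦ.2 ω B hBb).ne).1 hω
  · filter_upwards [h, hsub] with ω hω hω1
    simp only [sentMass_univ]
    exact (setLIntegral_eq_measure_iff hω1 hB (hΦ.2 ω B hBb).ne).2 hω

end Unexhausted

@[simp] lemma unexhausted_swap_iff {d : ℕ} {φ : Measure (Rd d)} {f : Rd d → Rd d → ℝ} {ξ : Rd d} :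
    Unexhausted φ (swap f) ξ ↔ Unsated φ f ξ :=
  Iff.rfl

namespace IsStableDensity

variable {d : ℕ} {φ ψ : Measure (Rd d)} {f : Rd d → Rd d → ℝ}

lemma eq_one_of_unexhausted_of_unsated (hst : IsStableDensity φ ψ f) {x ξ : Rd d}
    (hx : Unexhausted ψ f x) (hξ : Unsated φ f ξ) : f x ξ = 1 := by
  by_contra h
  have hlt : f x ξ < 1 := lt_of_le_of_ne (hst.1.2 x ξ) h
  exact hst.2 ⟨x, ξ, ⟨hlt, .inl hx⟩, ⟨hlt, .inl hξ⟩⟩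

lemma measure_unexhausted_le_one (hst : IsStableDensity φ ψ f) {ξ : Rd d}
    (hξ : Unsated φ f ξ) : φ {x | Unexhausted ψ f x} ≤ 1 :=
  calc φ {x | Unexhausted ψ f x} ≤ φ {x | 1 ≤ ENNReal.ofReal (f x ξ)} :=
        measure_mono fun x hx => by simp [hst.eq_one_of_unexhausted_of_unsated hx hξ]
    _ ≤ ∫⁻ x, ENNReal.ofReal (f x ξ) ∂φ := by
        simpa using mul_meas_ge_le_lintegral₀ (ENNReal.measurable_ofReal.comp
          (hst.1.1.1.comp (measurable_id.prodMk measurable_const))).aemeasurable 1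
    _ ≤ 1 := hst.1.1.2.2.2 ξ

end IsStableDensity

section Balancing

variable {Ω : Type*} [MeasurableSpace Ω] {d : ℕ} {θ : Rd d → Ω → Ω} {P : Measure Ω}
  {Φ Ψ : Ω → Measure (Rd d)} {F : Ω → Rd d → Rd d → ℝ} {lam : ℝ≥0∞}
  {L : AddSubgroup (Rd d)} [Countable L] {Q : Set (Rd d)}

lemma measurable_measure_unexhausted (hΦ : IsRandomMeasure Φ) (hΨ : IsRandomMeasure Ψ)
    (hFm : Measurable fun p : Ω × Rd d × Rd d => F p.1 p.2.1 p.2.2) :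
    Measurable fun ω => Φ ω {x | Unexhausted (Ψ ω) (F ω) x} := by
  simpa using measurable_measure_unexhausted_inter hΦ hΨ hFm MeasurableSet.univ

lemma ae_measure_unexhausted_eq_zero (hflow : IsMeasurableFlow θ)
    (hinv : IsFlowInvariant θ P) (hΦ : IsRandomMeasure Φ) (hΨ : IsRandomMeasure Ψ)
    (hΦa : FlowAdaptedMeasure θ Φ) (hΨa : FlowAdaptedMeasure θ Ψ) (hF : FlowAdaptedKernel θ F)
    (hΦi : HasIntensity P Φ lam) (hlam : lam ≠ ∞)
    (hsub : ∀ᵐ ω ∂P, ∀ x, ∫⁻ ξ, ENNReal.ofReal (F ω x ξ) ∂Ψ ω ≤ 1)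
    (hQm : MeasurableSet Q) (hQb : IsBounded Q) (hQ : ∀ x : Rd d, ∃! v : L, x + v ∈ Q)
    (h : meanTransport P Φ Ψ F Q Set.univ = lam * volume Q) :
    ∀ᵐ ω ∂P, Φ ω {x | Unexhausted (Ψ ω) (F ω) x} = 0 := by
  refine (lintegral_eq_zero_iff (measurable_measure_unexhausted hΦ hΨ hF.1)).1 ?_
  rw [lintegral_measure_unexhausted_eq_tsum hflow hinv hΦ hΨ hΦa hΨa hF hQm hQ,
    lintegral_congr_ae ((meanTransport_univ_eq_iff hΦ hΦi hlam hsub hQm hQb).1 h),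
    lintegral_zero, tsum_zero]

theorem meanTransport_univ_eq_intensity_mul_volume [IsProbabilityMeasure P] [Infinite L]
    (hflow : IsMeasurableFlow θ) (hinv : IsFlowInvariant θ P) (herg : IsErgodicFlow θ P)
    (hΦ : IsRandomMeasure Φ) (hΨ : IsRandomMeasure Ψ)
    (hΦa : FlowAdaptedMeasure θ Φ) (hΨa : FlowAdaptedMeasure θ Ψ)
    (hΦi : HasIntensity P Φ lam) (hΨi : HasIntensity P Ψ lam) (hlam : lam ≠ ∞)
    (hF : FlowAdaptedKernel θ F) (hstab : ∀ᵐ ω ∂P, IsStableDensity (Φ ω) (Ψ ω) (F ω))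
    (hQm : MeasurableSet Q) (hQb : IsBounded Q) (hQ : ∀ x : Rd d, ∃! v : L, x + v ∈ Q) :
    meanTransport P Φ Ψ F Q Set.univ = lam * volume Q := by
  by_contra hne
  have hV : ∀ᵐ ω ∂P, ω ∈ {ω | Ψ ω {ξ | Unsated (Φ ω) (F ω) ξ} ≠ 0} := by
    refine herg.ae_mem_of_measure_ne_zero
      (measurable_measure_unexhausted hΨ hΦ hF.swap.1 (measurableSet_singleton 0).compl)
      (fun s => Set.ext fun ω => ?_) fun h0 => hne ?_
    · simpa using congrArg (· ≠ 0) <|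
        measure_unexhausted_comp_flow hΦ hΨa hΦa hF.swap MeasurableSet.univ ω s
    · rw [meanTransport_univ_eq_swap_of_tiling hflow hinv hΦ hΨ hΦa hΨa hF hQm hQ,
        meanTransport_univ_eq_iff hΨ hΨi hlam (hstab.mono fun ω h => h.1.1.2.2.2) hQm hQb]
      filter_upwards [measure_eq_zero_iff_ae_notMem.1 h0] with ω hω
      exact measure_mono_null Set.inter_subset_left (not_not.1 hω)
  have hU : ∫⁻ ω, Φ ω {x | Unexhausted (Ψ ω) (F ω) x} ∂P ≤ 1 := by
    refine (lintegral_mono_ae ?_).trans_eq (lintegral_one.trans measure_univ)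
    filter_upwards [hV, hstab] with ω hω hst
    obtain ⟨ξ, hξ⟩ := nonempty_of_measure_ne_zero hω
    exact hst.measure_unexhausted_le_one hξ
  have hUQ : ∫⁻ ω, Φ ω ({x | Unexhausted (Ψ ω) (F ω) x} ∩ Q) ∂P ≠ 0 := fun h0 =>
    hne <| (meanTransport_univ_eq_iff hΦ hΦi hlam (hstab.mono fun ω h => h.1.1.2.2.1) hQm hQb).2 <|
      (lintegral_eq_zero_iff (measurable_measure_unexhausted_inter hΦ hΨ hF.1 hQm)).1 h0
  rw [lintegral_measure_unexhausted_eq_tsum hflow hinv hΦ hΨ hΦa hΨa hF hQm hQ,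
    ENNReal.tsum_const_eq_top_of_ne_zero hUQ] at hU
  exact absurd hU (by simp)

end Balancing

theorem stmt4_general {Ω : Type*} [MeasurableSpace Ω] {d : ℕ} (hd : 0 < d)
    (P : Measure Ω) [IsProbabilityMeasure P]
    (θ : Rd d → Ω → Ω) (hflow : IsMeasurableFlow θ) (hinv : IsFlowInvariant θ P)
    (herg : IsErgodicFlow θ P)
    (Φ Ψ : Ω → Measure (Rd d)) (hΦ : IsRandomMeasure Φ) (hΨ : IsRandomMeasure Ψ)
    (hΦa : FlowAdaptedMeasure θ Φ) (hΨa : FlowAdaptedMeasure θ Ψ)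
    (lam : ℝ≥0∞) (hlamtop : lam < ⊤)
    (hΦi : HasIntensity P Φ lam) (hΨi : HasIntensity P Ψ lam)
    (F : Ω → Rd d → Rd d → ℝ) (hF : FlowAdaptedKernel θ F)
    (hstab : ∀ᵐ ω ∂P, IsStableDensity (Φ ω) (Ψ ω) (F ω)) :
    ∀ᵐ ω ∂P, Φ ω {x | Unexhausted (Ψ ω) (F ω) x} = 0 ∧
      Ψ ω {ξ | Unsated (Φ ω) (F ω) ξ} = 0 := by
  obtain ⟨L, Q, _, _, hQm, hQb, hQ⟩ := exists_tiling_of_pos hd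
  have hMΦ := meanTransport_univ_eq_intensity_mul_volume hflow hinv herg hΦ hΨ hΦa hΨa hΦi hΨi
    hlamtop.ne hF hstab hQm hQb hQ
  have hMΨ := (meanTransport_univ_eq_swap_of_tiling hflow hinv hΦ hΨ hΦa hΨa hF hQm hQ).symm.trans
    hMΦ
  filter_upwards [ae_measure_unexhausted_eq_zero hflow hinv hΦ hΨ hΦa hΨa hF hΦi hlamtop.ne
      (hstab.mono fun ω h => h.1.1.2.2.1) hQm hQb hQ hMΦ,
    ae_measure_unexhausted_eq_zero hflow hinv hΨ hΦ hΨa hΦa hF.swap hΨi hlamtop.ne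
      (hstab.mono fun ω h => h.1.1.2.2.2) hQm hQb hQ hMΨ] with ω hU hV
  exact ⟨hU, hV⟩

/-- If the intensities are equal (positive and finite), then a.s. any
flow-adapted stable constrained density is balancing: the unexhausted sites are `Φ(ω)`-null
and the unsated centers are `Ψ(ω)`-null. -/
theorem stmt4 {Ω : Type*} [MeasurableSpace Ω] {d : ℕ} (hd : 0 < d)
    (P : Measure Ω) [IsProbabilityMeasure P]
    (θ : Rd d → Ω → Ω) (hflow : IsMeasurableFlow θ) (hinv : IsFlowInvariant θ P)
    (herg : IsErgodicFlow θ P)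
    (Φ Ψ : Ω → Measure (Rd d)) (hΦ : IsRandomMeasure Φ) (hΨ : IsRandomMeasure Ψ)
    (hΦa : FlowAdaptedMeasure θ Φ) (hΨa : FlowAdaptedMeasure θ Ψ)
    (lam : ℝ≥0∞) (hlam0 : 0 < lam) (hlamtop : lam < ⊤)
    (hΦi : HasIntensity P Φ lam) (hΨi : HasIntensity P Ψ lam)
    (F : Ω → Rd d → Rd d → ℝ) (hF : FlowAdaptedKernel θ F)
    (hstab : ∀ᵐ ω ∂P, IsStableDensity (Φ ω) (Ψ ω) (F ω)) :
    ∀ᵐ ω ∂P, Φ ω {x | Unexhausted (Ψ ω) (F ω) x} = 0 ∧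
      Ψ ω {ξ | Unsated (Φ ω) (F ω) ξ} = 0 :=
  stmt4_general hd P θ hflow hinv herg Φ Ψ hΦ hΨ hΦa hΨa lam hlamtop hΦi hΨi F hF hstab
end
end
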